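/- arXiv:1501.03904 — 10 statements merged into one kernel-verified Lean document; each statement's English description precedes it below -/
import Mathlib

section
/- Let k ≥ 1 and m ≥ 1 be integers, let b₁, …, b_k be nonzero real numbers, and let Ã be a nonzero real polynomial in the variables x₁, …, x_k. Set A = (b₁x₁ + ⋯ + b_kx_k)^m · Ã. Then n(A) ≥ Σ_{i=1}^{k} n_i(Ã). -/
/-!
Let `L = b₁x₁ + ⋯ + b_kx_k`. If `e` is a monomial of `Ã` of maximal `xᵢ`-degree, the monomial
`e · xᵢ^m` of `A = L^m Ã` can only arise as `xᵢ^m · e`, since every other monomial of the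
homogeneous `L^m` has `xᵢ`-degree `< m`; so its coefficient is `bᵢ^m · coeff e Ã ≠ 0`.
For `i ≠ j` these monomials are distinct, because the `xⱼ`-degree of `e · xⱼ^m` exceeds the
maximal `xⱼ`-degree of `Ã`, which bounds the `xⱼ`-degree of `e · xᵢ^m`.
-/

open MvPolynomial Finsupp

variable {σ R : Type*}

theorem Finsupp.eq_single_of_degree_le_of_le_apply {f : σ →₀ ℕ} {i : σ} {m : ℕ}
    (hi : m ≤ f i) (hdeg : f.degree ≤ m) : f = single i m := by
  obtain ⟨g, rfl⟩ := exists_add_of_le (single_le_iff.mpr hi : single i m ≤ f)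
  have hg : g.degree = 0 := by
    rw [map_add, degree_single] at hdeg
    omega
  rw [(degree_eq_zero_iff g).mp hg, add_zero]

namespace MvPolynomial

/-- Its cardinality is `nᵢ(Q)`. -/
noncomputable def supportDegreeOfEq [CommSemiring R] (i : σ) (Q : MvPolynomial σ R) :
    Finset (σ →₀ ℕ) :=
  Q.support.filter fun d => d i = Q.degreeOf i

section CommSemiring

variable [CommSemiring R]

theorem IsHomogeneous.coeff_add_single_mul {P Q : MvPolynomial σ R} {m : ℕ}
    (hP : P.IsHomogeneous m) {i : σ} {e : σ →₀ ℕ} (he : ∀ v ∈ Q.support, v i ≤ e i) :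
    coeff (e + single i m) (P * Q) = coeff (single i m) P * coeff e Q := by
  classical
  rw [coeff_mul, Finset.sum_eq_single (single i m, e)]
  · rintro ⟨u, v⟩ huv hne
    simp only [Finset.HasAntidiagonal.mem_antidiagonal] at huv
    by_contra hc
    have hu : u.degree = m := by
      by_contra h
      exact hc (by rw [hP.coeff_eq_zero h, zero_mul])
    have hv : v i ≤ e i := he v (mem_support_iff.mpr (right_ne_zero_of_mul hc))
    have hui : m ≤ u i := by
      have := DFunLike.congr_fun huv i
      simp only [Finsupp.add_apply, single_eq_same] at this
      omega
    obtain rfl := eq_single_of_degree_le_of_le_apply hui hu.le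
    rw [add_comm e] at huv
    exact hne (by rw [add_left_cancel huv])
  · intro h
    exact absurd (Finset.HasAntidiagonal.mem_antidiagonal.mpr (add_comm _ _)) h

theorem IsHomogeneous.apply_le_of_mem_support {P : MvPolynomial σ R} {n : ℕ}
    (hP : P.IsHomogeneous n) {v : σ →₀ ℕ} (hv : v ∈ P.support) (i : σ) : v i ≤ n := by
  have : v.degree = n := by
    by_contra h
    exact mem_support_iff.mp hv (hP.coeff_eq_zero h)
  exact this ▸ le_degree i v

variable [Fintype σ]

theorem coeff_single_linearForm (b : σ → R) (i : σ) :
    coeff (single i 1) (∑ j, C (b j) * X j) = b i := by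
  classical
  simp [coeff_sum, coeff_C_mul, coeff_X, single_eq_single_iff]

theorem isHomogeneous_linearForm (b : σ → R) : (∑ j, C (b j) * X j).IsHomogeneous 1 :=
  IsHomogeneous.sum _ _ _ fun j _ => isHomogeneous_C_mul_X (b j) j

theorem isHomogeneous_linearForm_pow (b : σ → R) (m : ℕ) :
    ((∑ j, C (b j) * X j) ^ m).IsHomogeneous m := by
  simpa using (isHomogeneous_linearForm b).pow m

theorem coeff_single_linearForm_pow (b : σ → R) (i : σ) (m : ℕ) :
    coeff (single i m) ((∑ j, C (b j) * X j) ^ m) = b i ^ m := by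
  induction m with
  | zero => simp
  | succ n ih =>
    have hdeg : ∀ v ∈ ((∑ j, C (b j) * X j) ^ n).support, v i ≤ (single i n) i := by
      intro v hv
      rw [single_eq_same]
      exact (isHomogeneous_linearForm_pow b n).apply_le_of_mem_support hv i
    rw [pow_succ', pow_succ', single_add,
      (isHomogeneous_linearForm b).coeff_add_single_mul hdeg, coeff_single_linearForm, ih]

end CommSemiring

theorem sum_card_supportDegreeOfEq_le [Fintype σ] [CommSemiring R] [NoZeroDivisors R]
    {P : MvPolynomial σ R} {m : ℕ} (hP : P.IsHomogeneous m) (hm : m ≠ 0)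
    (hPi : ∀ i, coeff (single i m) P ≠ 0) (Q : MvPolynomial σ R) :
    ∑ i, (supportDegreeOfEq i Q).card ≤ (P * Q).support.card := by
  rw [← Finset.card_sigma]
  refine Finset.card_le_card_of_injOn (fun ie => ie.2 + single ie.1 m) ?_ ?_
  · rintro ⟨i, e⟩ hie
    simp only [Finset.coe_sigma, Set.mem_sigma_iff, Finset.mem_coe, supportDegreeOfEq,
      Finset.mem_filter, Finset.mem_univ, true_and] at hie
    obtain ⟨heQ, hei⟩ := hie
    have he : ∀ v ∈ Q.support, v i ≤ e i := fun v hv => hei ▸ monomial_le_degreeOf i hv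
    rw [Finset.mem_coe, mem_support_iff, hP.coeff_add_single_mul he]
    exact mul_ne_zero (hPi i) (mem_support_iff.mp heQ)
  · rintro ⟨i, e⟩ hie ⟨j, f⟩ hjf heq
    simp only [Finset.coe_sigma, Set.mem_sigma_iff, Finset.mem_coe, supportDegreeOfEq,
      Finset.mem_filter, Finset.mem_univ, true_and] at hie hjf heq
    obtain rfl | hij := eq_or_ne i j
    · rw [add_right_cancel heq]
    · have hj := DFunLike.congr_fun heq j
      simp only [Finsupp.add_apply, single_eq_same, single_eq_of_ne' hij, add_zero] at hj
      have := monomial_le_degreeOf j hie.1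
      omega

end MvPolynomial

theorem statement0_general (k m : ℕ) (hm : 1 ≤ m)
    (b : Fin k → ℝ) (hb : ∀ i, b i ≠ 0)
    (Atil : MvPolynomial (Fin k) ℝ) :
    ∑ i : Fin k,
        (Atil.support.filter (fun d => d i = Atil.support.sup (fun e => e i))).card
      ≤ (((∑ i : Fin k, C (b i) * X i) ^ m * Atil).support).card := by
  simp only [← degreeOf_eq_sup]
  refine sum_card_supportDegreeOfEq_le (isHomogeneous_linearForm_pow b m) (by omega)
    (fun i => ?_) Atil
  rw [coeff_single_linearForm_pow]
  exact pow_ne_zero m (hb i)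

/-- For `A = (b₁x₁ + ⋯ + b_kx_k)^m * Ã` with all `bᵢ ≠ 0`, `m ≥ 1` and
`Ã ≠ 0`, the number of monomials `n(A)` is at least `Σᵢ nᵢ(Ã)`, where `nᵢ(Ã)` counts the
monomials of `Ã` whose `xᵢ`-degree is maximal among the monomials of `Ã`. -/
theorem statement0 (k m : ℕ) (hk : 1 ≤ k) (hm : 1 ≤ m)
    (b : Fin k → ℝ) (hb : ∀ i, b i ≠ 0)
    (Atil : MvPolynomial (Fin k) ℝ) (hA : Atil ≠ 0) :
    ∑ i : Fin k,
        (Atil.support.filter (fun d => d i = Atil.support.sup (fun e => e i))).card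
      ≤ (((∑ i : Fin k, C (b i) * X i) ^ m * Atil).support).card :=
  statement0_general k m hm b hb Atil
end

section
/- Let k ≥ 1 and m ≥ 2 be integers, let b₁, …, b_k be nonzero real numbers, and let Q be a nonzero homogeneous real polynomial in x₁, …, x_k all of whose coefficients are nonnegative. Then the homogeneous polynomial P = (b₁x₁ + ⋯ + b_kx_k)^m · Q satisfies n(P) ≥ 2k − 1. -/
/-!
Induction on `k`, expanding `P` in the first variable: `P = ∑ⱼ Pⱼ x₁ʲ`. The lowest nonzero
`Pⱼ` is `(b₂x₂ + ⋯ + b_kx_k)ᵐ` times the lowest coefficient of `Q`, so by induction it has at least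
`2k - 3` monomials. Over the fraction field of the other variables, `P` has the nonzero root
`-(b₂x₂ + ⋯ + b_kx_k)/b₁` of multiplicity `m ≥ 2`; a polynomial with one or two terms has no
nonzero multiple root (compare `p(r) = 0` with `r p'(r) = 0`), so at least two more `Pⱼ` are
nonzero, each contributing a monomial.
-/

open Finset

namespace Polynomial

variable {R : Type*} [CommRing R]

theorem mul_eval_derivative_C_mul_X_pow (x r : R) (i : ℕ) :
    r * (derivative (C x * X ^ i)).eval r = i * (x * r ^ i) := by
  cases i with
  | zero => simp
  | succ i =>
    simp only [derivative_C_mul_X_pow, eval_mul, eval_C, eval_pow, eval_X]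
    push_cast
    ring

variable [IsDomain R] [CharZero R]

theorem three_le_card_support_of_sq_dvd {p : R[X]} (hp : p ≠ 0) {r : R} (hr : r ≠ 0)
    (hdvd : (X - C r) ^ 2 ∣ p) : 3 ≤ #p.support := by
  have h₀ : p.eval r = 0 := by obtain ⟨q, rfl⟩ := hdvd; simp
  have h₁ : (derivative p).eval r = 0 := by
    obtain ⟨q, rfl⟩ := hdvd; simp [derivative_mul, derivative_pow]
  by_contra! hcard
  have hpos : 0 < #p.support := card_pos.mpr (support_nonempty.mpr hp)
  obtain hone | htwo : #p.support = 1 ∨ #p.support = 2 := by omega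
  · obtain ⟨i, x, hx, rfl⟩ := card_support_eq_one.mp hone
    simp [hx, hr] at h₀
  · obtain ⟨i, j, hij, x, y, hx, hy, rfl⟩ := card_support_eq_two.mp htwo
    have hsum : x * r ^ i + y * r ^ j = 0 := by simpa using h₀
    have hweighted : i * (x * r ^ i) + j * (y * r ^ j) = 0 := by
      rw [← mul_eval_derivative_C_mul_X_pow, ← mul_eval_derivative_C_mul_X_pow, ← mul_add,
        ← eval_add, ← derivative_add, h₁, mul_zero]
    have : ((j : R) - i) * (y * r ^ j) = 0 := by linear_combination hweighted - (i : R) * hsum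
    have hji : (j : R) - i ≠ 0 := sub_ne_zero.mpr (Nat.cast_injective.ne hij.ne')
    simp [hji, hy, hr] at this

theorem three_le_card_support_linear_pow_mul {F : Type*} [Field F] [CharZero F] {c w : F}
    (hc : c ≠ 0) (hw : w ≠ 0) {m : ℕ} (hm : 2 ≤ m) {q : F[X]} (hq : q ≠ 0) :
    3 ≤ #((C c * X + C w) ^ m * q).support := by
  have hlin : C c * X + C w = C c * (X - C (-(w / c))) := by
    rw [map_neg, sub_neg_eq_add, mul_add, ← C_mul, mul_div_cancel₀ _ hc]
  rw [hlin, mul_pow]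
  refine three_le_card_support_of_sq_dvd (r := -(w / c)) ?_ (by simp [hc, hw]) ?_
  · exact mul_ne_zero (mul_ne_zero (pow_ne_zero _ (C_ne_zero.mpr hc))
      (pow_ne_zero _ (X_sub_C_ne_zero _))) hq
  · exact ((pow_dvd_pow _ hm).mul_left _).mul_right _

theorem three_le_card_support_linear_pow_mul_of_isDomain {c w : R} (hc : c ≠ 0) (hw : w ≠ 0)
    {m : ℕ} (hm : 2 ≤ m) {q : R[X]} (hq : q ≠ 0) :
    3 ≤ #((C c * X + C w) ^ m * q).support := by
  have hinj : Function.Injective (algebraMap R (FractionRing R)) := IsFractionRing.injective _ _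
  rw [← support_map_of_injective _ hinj]
  simpa using three_le_card_support_linear_pow_mul ((map_ne_zero_iff _ hinj).mpr hc)
    ((map_ne_zero_iff _ hinj).mpr hw) hm ((Polynomial.map_ne_zero_iff hinj).mpr hq)

end Polynomial

open MvPolynomial

namespace MvPolynomial

variable {R : Type*}

theorem card_support_eq_sum_card_support_coeff_finSuccEquiv [CommSemiring R] {n : ℕ}
    (f : MvPolynomial (Fin (n + 1)) R) :
    #f.support = ∑ i ∈ (finSuccEquiv R n f).support, #((finSuccEquiv R n f).coeff i).support := by
  classical
  rw [card_eq_sum_card_fiberwise (f := fun m => m 0) (t := (finSuccEquiv R n f).support)]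
  · refine sum_congr rfl fun i _ => ?_
    rw [← image_support_finSuccEquiv, card_image_of_injective _ (Finsupp.cons_right_injective i)]
  · intro m hm
    rw [mem_coe, support_finSuccEquiv]
    exact mem_image_of_mem _ hm

theorem card_support_coeff_finSuccEquiv_add_le [CommSemiring R] {n : ℕ}
    (f : MvPolynomial (Fin (n + 1)) R) {e : ℕ} (he : e ∈ (finSuccEquiv R n f).support) :
    #((finSuccEquiv R n f).coeff e).support + #(finSuccEquiv R n f).support ≤ #f.support + 1 := by
  have hterm : ∀ i ∈ (finSuccEquiv R n f).support.erase e,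
      1 ≤ #((finSuccEquiv R n f).coeff i).support := fun i hi =>
    card_pos.mpr (support_nonempty.mpr (Polynomial.mem_support_iff.mp (mem_of_mem_erase hi)))
  have hrest := card_nsmul_le_sum _ _ _ hterm
  rw [smul_eq_mul, mul_one] at hrest
  rw [card_support_eq_sum_card_support_coeff_finSuccEquiv, ← add_sum_erase _ _ he,
    ← card_erase_add_one he]
  omega

noncomputable def linearForm [CommSemiring R] {k : ℕ} (b : Fin k → R) : MvPolynomial (Fin k) R :=
  ∑ i, C (b i) * X i

theorem linearForm_ne_zero [CommSemiring R] {k : ℕ} {b : Fin k → R} {i : Fin k} (hi : b i ≠ 0) :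
    linearForm b ≠ 0 := by
  classical
  intro h
  have := congrArg (coeff (Finsupp.single i 1)) h
  simp [linearForm, coeff_sum, coeff_X, Finsupp.single_left_inj] at this
  exact hi this

theorem finSuccEquiv_linearForm [CommSemiring R] {n : ℕ} (b : Fin (n + 1) → R) :
    finSuccEquiv R n (linearForm b)
      = Polynomial.C (C (b 0)) * Polynomial.X + Polynomial.C (linearForm (Fin.tail b)) := by
  simp [linearForm, Fin.sum_univ_succ, Fin.tail, finSuccEquiv_apply]

end MvPolynomial

theorem two_mul_add_one_le_card_support_linearForm_pow_mul {R : Type*} [CommRing R] [IsDomain R]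
    [CharZero R] {m : ℕ} (hm : 2 ≤ m) {k : ℕ} {b : Fin (k + 1) → R} (hb : ∀ i, b i ≠ 0)
    {Q : MvPolynomial (Fin (k + 1)) R} (hQ : Q ≠ 0) :
    2 * k + 1 ≤ #(linearForm b ^ m * Q).support := by
  induction k with
  | zero =>
    exact card_pos.mpr (support_nonempty.mpr
      (mul_ne_zero (pow_ne_zero _ (linearForm_ne_zero (hb 0))) hQ))
  | succ k ih =>
    set W := linearForm (Fin.tail b)
    set q := finSuccEquiv R (k + 1) Q
    set g := (Polynomial.C (C (b 0)) * Polynomial.X + Polynomial.C W) ^ m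
    have hW : W ≠ 0 := linearForm_ne_zero (hb (Fin.succ 0))
    have hq : q ≠ 0 := AddEquivClass.map_ne_zero_iff.mpr hQ
    have hsplit : finSuccEquiv R (k + 1) (linearForm b ^ m * Q) = g * q := by
      rw [map_mul, map_pow, finSuccEquiv_linearForm]
    have hg₀ : g.coeff 0 = W ^ m := by simp [g, Polynomial.coeff_zero_eq_eval_zero]
    have hgtrail : g.natTrailingDegree = 0 :=
      Polynomial.natTrailingDegree_eq_zero.mpr (.inr (hg₀ ▸ pow_ne_zero _ hW))
    have hlowest : (g * q).coeff q.natTrailingDegree = W ^ m * q.trailingCoeff := by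
      simpa [hgtrail, Polynomial.trailingCoeff, hg₀] using
        Polynomial.coeff_mul_natTrailingDegree_add_natTrailingDegree (p := g) (q := q)
    have hlow : 2 * k + 1 ≤ #((g * q).coeff q.natTrailingDegree).support := by
      rw [hlowest]
      exact ih (fun i => hb i.succ) (Polynomial.trailingCoeff_nonzero_iff_nonzero.mpr hq)
    have hthree : 3 ≤ #(g * q).support :=
      Polynomial.three_le_card_support_linear_pow_mul_of_isDomain
        (C_ne_zero.mpr (hb 0)) hW hm hq
    have hmem : q.natTrailingDegree ∈ (g * q).support := by
      rw [Polynomial.mem_support_iff, hlowest]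
      exact mul_ne_zero (pow_ne_zero _ hW) (Polynomial.trailingCoeff_nonzero_iff_nonzero.mpr hq)
    have hcount := card_support_coeff_finSuccEquiv_add_le (linearForm b ^ m * Q)
      (hsplit ▸ hmem)
    rw [hsplit] at hcount
    omega

theorem statement1_general (k m : ℕ) (hm : 2 ≤ m)
    (b : Fin k → ℝ) (hb : ∀ i, b i ≠ 0)
    (Q : MvPolynomial (Fin k) ℝ) (hQ0 : Q ≠ 0) :
    2 * k - 1 ≤ (((∑ i : Fin k, C (b i) * X i) ^ m * Q).support).card := by
  cases k with
  | zero => simp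
  | succ k =>
    exact (by omega : 2 * (k + 1) - 1 = 2 * k + 1).trans_le
      (two_mul_add_one_le_card_support_linearForm_pow_mul hm hb hQ0)

/-- If `m ≥ 2`, all `bᵢ ≠ 0` and `Q` is a nonzero homogeneous polynomial
with nonnegative coefficients, then `P = (b₁x₁ + ⋯ + b_kx_k)^m * Q` has at least `2k - 1`
monomials. -/
theorem statement1 (k m : ℕ) (hk : 1 ≤ k) (hm : 2 ≤ m)
    (b : Fin k → ℝ) (hb : ∀ i, b i ≠ 0)
    (Q : MvPolynomial (Fin k) ℝ) (hQ0 : Q ≠ 0)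
    (n : ℕ) (hhom : Q.IsHomogeneous n)
    (hnonneg : ∀ d, 0 ≤ Q.coeff d) :
    2 * k - 1 ≤ (((∑ i : Fin k, C (b i) * X i) ^ m * Q).support).card :=
  statement1_general k m hm b hb Q hQ0
end

section
/- Let r ≥ 2 be an integer and let Q be a homogeneous real polynomial in the variables x₁, …, x_{2r} all of whose coefficients are nonnegative and with n(Q) ≥ 2. Then the polynomial P = (x₁ + ⋯ + x_r − x_{r+1} − ⋯ − x_{2r}) · Q satisfies n(P) ≥ 3r − 1. -/
open MvPolynomial Finset

namespace St2

variable {r : ℕ}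

noncomputable def ee (i : Fin (2*r)) : Fin (2*r) →₀ ℕ := Finsupp.single i 1

def Vp (r : ℕ) : Finset (Fin (2*r)) := univ.filter (fun i => (i:ℕ) < r)
def Vm (r : ℕ) : Finset (Fin (2*r)) := univ.filter (fun i => ¬ (i:ℕ) < r)

noncomputable def FS (I : Finset (Fin (2*r))) (X : Finset (Fin (2*r) →₀ ℕ)) :
    Finset (Fin (2*r) →₀ ℕ) :=
  (I ×ˢ X).image (fun p => p.2 + ee p.1)

lemma mem_FS {I : Finset (Fin (2*r))} {X : Finset (Fin (2*r) →₀ ℕ)}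
    {μ : Fin (2*r) →₀ ℕ} :
    μ ∈ FS I X ↔ ∃ i ∈ I, ∃ s ∈ X, s + ee i = μ := by
  simp only [FS, mem_image, mem_product, Prod.exists]
  constructor
  · rintro ⟨i, s, ⟨hi, hs⟩, h⟩; exact ⟨i, hi, s, hs, h⟩
  · rintro ⟨i, hi, s, hs, h⟩; exact ⟨i, s, ⟨hi, hs⟩, h⟩

def dp (r : ℕ) (m : Fin (2*r) →₀ ℕ) : ℕ := ∑ i ∈ Vp r, m i

lemma dp_add (x y : Fin (2*r) →₀ ℕ) : dp r (x + y) = dp r x + dp r y := by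
  simp [dp, Finsupp.add_apply, Finset.sum_add_distrib]

lemma dp_ee (i : Fin (2*r)) : dp r (ee i) = if (i:ℕ) < r then 1 else 0 := by
  classical
  simp only [dp, ee, Finsupp.single_apply]
  rw [Finset.sum_ite_eq (Vp r) i (fun _ => 1)]
  simp [Vp]

lemma ee_le_iff {i : Fin (2*r)} {μ : Fin (2*r) →₀ ℕ} : ee i ≤ μ ↔ μ i ≠ 0 := by
  rw [ee, Finsupp.single_le_iff, Nat.one_le_iff_ne_zero]

lemma sub_add_ee {i : Fin (2*r)} {μ : Fin (2*r) →₀ ℕ} (h : μ i ≠ 0) :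
    (μ - ee i) + ee i = μ := tsub_add_cancel_of_le (ee_le_iff.mpr h)

lemma add_sub_ee (s : Fin (2*r) →₀ ℕ) (i : Fin (2*r)) : (s + ee i) - ee i = s :=
  add_tsub_cancel_right s (ee i)

lemma add_ee_apply_ne (s : Fin (2*r) →₀ ℕ) (i : Fin (2*r)) : (s + ee i) i ≠ 0 := by
  simp [Finsupp.add_apply, ee, Finsupp.single_apply]

lemma ee_inj {i j : Fin (2*r)} (h : ee (r:=r) i = ee j) : i = j :=
  (Finsupp.single_left_inj one_ne_zero).mp h


lemma card_Vp : (Vp r).card = r := by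
  classical
  have h : Vp r = (Finset.univ : Finset (Fin r)).image
      (fun j : Fin r => (Fin.castLE (by omega) j : Fin (2*r))) := by
    ext i
    simp only [Vp, mem_filter, mem_univ, true_and, mem_image]
    constructor
    · intro hi
      refine ⟨⟨(i:ℕ), hi⟩, ?_⟩
      ext
      simp
    · rintro ⟨j, rfl⟩
      exact j.2
  rw [h, Finset.card_image_of_injective _ (Fin.castLE_injective _)]
  simp

lemma card_Vm : (Vm r).card = r := by
  classical
  have h := Finset.card_filter_add_card_filter_not
    (s := (univ : Finset (Fin (2*r)))) (p := fun i => (i:ℕ) < r)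
  have h2 : (Vp r).card = r := card_Vp
  simp only [Finset.card_univ, Fintype.card_fin] at h
  have : (Vp r).card + (Vm r).card = 2*r := by
    simpa [Vp, Vm] using h
  omega

lemma mem_Vp {i : Fin (2*r)} : i ∈ Vp r ↔ (i:ℕ) < r := by simp [Vp]
lemma mem_Vm {i : Fin (2*r)} : i ∈ Vm r ↔ ¬ (i:ℕ) < r := by simp [Vm]

lemma card_FS_singleton (I : Finset (Fin (2*r))) (a : Fin (2*r) →₀ ℕ) :
    (FS I {a}).card = I.card := by
  classical
  have h : FS I {a} = I.image (fun i => a + ee i) := by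
    ext μ
    simp only [mem_FS, mem_image, mem_singleton]
    constructor
    · rintro ⟨i, hi, s, rfl, rfl⟩; exact ⟨i, hi, rfl⟩
    · rintro ⟨i, hi, rfl⟩; exact ⟨i, hi, a, rfl, rfl⟩
  rw [h, Finset.card_image_of_injective]
  intro i j hij
  exact ee_inj (add_left_cancel hij)

/-- weight functional used for the sumset bound -/
def th (r : ℕ) (m : Fin (2*r) →₀ ℕ) : ℕ := ∑ i : Fin (2*r), (i:ℕ) * m i

lemma th_add_ee (x : Fin (2*r) →₀ ℕ) (i : Fin (2*r)) :
    th r (x + ee i) = th r x + (i:ℕ) := by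
  classical
  simp only [th, Finsupp.add_apply, mul_add, Finset.sum_add_distrib, ee,
    Finsupp.single_apply]
  congr 1
  have h : ∀ k : Fin (2*r), (k:ℕ) * (if i = k then 1 else 0)
      = if i = k then (i:ℕ) else 0 := by
    intro k; split
    · next h => simp [h]
    · simp
  rw [Finset.sum_congr rfl (fun k _ => h k), Finset.sum_ite_eq univ i (fun _ => (i:ℕ))]
  simp


lemma L1 {I : Finset (Fin (2*r))} {X : Finset (Fin (2*r) →₀ ℕ)}
    (hI : I.Nonempty) (hX : X.Nonempty) :
    X.card + I.card ≤ (FS I X).card + 1 := by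
  classical
  obtain ⟨xmax, hxmaxX, hxmax⟩ := Finset.exists_max_image X (th r) hX
  set i1 := I.min' hI with hi1
  have hi1I : i1 ∈ I := I.min'_mem hI
  set A : Finset (Fin (2*r) →₀ ℕ) := X.image (fun x => x + ee i1) with hA
  set B : Finset (Fin (2*r) →₀ ℕ) := I.image (fun i => xmax + ee i) with hB
  have hAcard : A.card = X.card := Finset.card_image_of_injective _ (by
    intro x y hxy; exact add_right_cancel hxy)
  have hBcard : B.card = I.card := Finset.card_image_of_injective _ (by
    intro i j hij; exact ee_inj (add_left_cancel hij))
  have hsub : A ∪ B ⊆ FS I X := by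
    intro μ hμ
    rcases Finset.mem_union.mp hμ with h | h
    · obtain ⟨x, hx, rfl⟩ := Finset.mem_image.mp h
      exact mem_FS.mpr ⟨i1, hi1I, x, hx, rfl⟩
    · obtain ⟨i, hi, rfl⟩ := Finset.mem_image.mp h
      exact mem_FS.mpr ⟨i, hi, xmax, hxmaxX, rfl⟩
  have hinter : A ∩ B ⊆ {xmax + ee i1} := by
    intro μ hμ
    obtain ⟨hμA, hμB⟩ := Finset.mem_inter.mp hμ
    obtain ⟨x, hx, hxe⟩ := Finset.mem_image.mp hμA
    obtain ⟨i, hi, hie⟩ := Finset.mem_image.mp hμB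
    have hth : th r x + (i1:ℕ) = th r xmax + (i:ℕ) := by
      rw [← th_add_ee, ← th_add_ee, hxe, hie]
    have h1 : th r x ≤ th r xmax := hxmax x hx
    have h2 : (i1:ℕ) ≤ (i:ℕ) := I.min'_le i hi
    have h3 : (i1:ℕ) = (i:ℕ) := by omega
    have h4 : i1 = i := Fin.ext h3
    have h6 : x + ee i1 = xmax + ee i1 := by
      have := hxe.trans hie.symm
      rwa [← h4] at this
    rw [Finset.mem_singleton, ← hxe, add_right_cancel h6]
  have hcardinter : (A ∩ B).card ≤ 1 := by
    calc (A ∩ B).card ≤ ({xmax + ee i1} : Finset _).card := Finset.card_le_card hinter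
    _ = 1 := Finset.card_singleton _
  have := Finset.card_union_add_card_inter A B
  have hle : (A ∪ B).card ≤ (FS I X).card := Finset.card_le_card hsub
  omega

lemma L2 {I : Finset (Fin (2*r))} {X : Finset (Fin (2*r) →₀ ℕ)}
    (hX : 2 ≤ X.card) :
    2 * I.card ≤ (FS I X).card + 1 := by
  classical
  obtain ⟨u, hu, v, hv, huv⟩ := Finset.one_lt_card.mp hX
  set A : Finset (Fin (2*r) →₀ ℕ) := I.image (fun i => u + ee i) with hA
  set B : Finset (Fin (2*r) →₀ ℕ) := I.image (fun i => v + ee i) with hB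
  have hAcard : A.card = I.card := Finset.card_image_of_injective _ (by
    intro i j hij; exact ee_inj (add_left_cancel hij))
  have hBcard : B.card = I.card := Finset.card_image_of_injective _ (by
    intro i j hij; exact ee_inj (add_left_cancel hij))
  have hsub : A ∪ B ⊆ FS I X := by
    intro μ hμ
    rcases Finset.mem_union.mp hμ with h | h
    · obtain ⟨i, hi, rfl⟩ := Finset.mem_image.mp h
      exact mem_FS.mpr ⟨i, hi, u, hu, rfl⟩
    · obtain ⟨i, hi, rfl⟩ := Finset.mem_image.mp h
      exact mem_FS.mpr ⟨i, hi, v, hv, rfl⟩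
  have hinter : (A ∩ B).card ≤ 1 := by
    rw [Finset.card_le_one]
    intro μ1 hμ1 μ2 hμ2
    obtain ⟨hμ1A, hμ1B⟩ := Finset.mem_inter.mp hμ1
    obtain ⟨hμ2A, hμ2B⟩ := Finset.mem_inter.mp hμ2
    obtain ⟨i, hi, hie⟩ := Finset.mem_image.mp hμ1A
    obtain ⟨j, hj, hje⟩ := Finset.mem_image.mp hμ1B
    obtain ⟨k, hk, hke⟩ := Finset.mem_image.mp hμ2A
    obtain ⟨l, hl, hle⟩ := Finset.mem_image.mp hμ2B
    -- μ1 = u + ee i = v + ee j, μ2 = u + ee k = v + ee l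
    have hji : j ≠ i := by
      intro h
      apply huv
      rw [h] at hje
      exact add_right_cancel (hie.trans hje.symm)
    have key : ee (r:=r) i + ee l = ee k + ee j := by
      have h1 : u + (ee i + ee l) = (u + ee i) + ee l := (add_assoc u (ee i) (ee l)).symm
      have h2 : u + (ee k + ee j) = (u + ee k) + ee j := (add_assoc u (ee k) (ee j)).symm
      have h3 : (u + ee i) + ee l = (u + ee k) + ee j := by
        rw [hie, hke, ← hje, ← hle]
        exact add_right_comm v (ee j) (ee l)
      have := h1.trans (h3.trans h2.symm)
      exact add_left_cancel this
    have hcoord := congrArg (fun f : Fin (2*r) →₀ ℕ => f i) key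
    simp only [Finsupp.add_apply, ee, Finsupp.single_apply, if_pos, hji, if_false,
      if_true] at hcoord
    have hki : k = i := by
      by_contra hki
      simp [hki] at hcoord
    rw [← hie, ← hke, hki]
  have := Finset.card_union_add_card_inter A B
  have hle : (A ∪ B).card ≤ (FS I X).card := Finset.card_le_card hsub
  omega

noncomputable def LL (r : ℕ) : MvPolynomial (Fin (2*r)) ℝ :=
  ∑ i : Fin (2*r), C (if (i : ℕ) < r then (1 : ℝ) else -1) * X i

lemma coeff_LL_mul (Q : MvPolynomial (Fin (2*r)) ℝ) (μ : Fin (2*r) →₀ ℕ) :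
    coeff μ (LL r * Q)
      = ∑ i : Fin (2*r), (if (i:ℕ) < r then (1:ℝ) else -1) *
          (if μ i ≠ 0 then coeff (μ - ee i) Q else 0) := by
  classical
  rw [LL, Finset.sum_mul, coeff_sum]
  refine Finset.sum_congr rfl (fun i _ => ?_)
  rw [mul_assoc, coeff_C_mul, coeff_X_mul']
  simp only [Finsupp.mem_support_iff, ee]

lemma coeff_LL_pos {Q : MvPolynomial (Fin (2*r)) ℝ}
    (hnonneg : ∀ d, 0 ≤ Q.coeff d) {μ : Fin (2*r) →₀ ℕ}
    (h1 : ∀ k : Fin (2*r), ¬ (k:ℕ) < r → μ k ≠ 0 → coeff (μ - ee k) Q = 0)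
    {i : Fin (2*r)} (hi : (i:ℕ) < r) (h2 : μ i ≠ 0) (h3 : coeff (μ - ee i) Q ≠ 0) :
    0 < coeff μ (LL r * Q) := by
  classical
  rw [coeff_LL_mul]
  apply Finset.sum_pos'
  · intro k _
    by_cases hk : (k:ℕ) < r
    · rw [if_pos hk, one_mul]
      split
      · exact hnonneg _
      · exact le_refl 0
    · rw [if_neg hk]
      by_cases hμk : μ k ≠ 0
      · rw [if_pos hμk, h1 k hk hμk, mul_zero]
      · rw [if_neg hμk, mul_zero]
  · refine ⟨i, Finset.mem_univ i, ?_⟩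
    rw [if_pos hi, one_mul, if_pos h2]
    exact lt_of_le_of_ne (hnonneg _) (Ne.symm h3)

lemma coeff_LL_neg {Q : MvPolynomial (Fin (2*r)) ℝ}
    (hnonneg : ∀ d, 0 ≤ Q.coeff d) {μ : Fin (2*r) →₀ ℕ}
    (h1 : ∀ k : Fin (2*r), (k:ℕ) < r → μ k ≠ 0 → coeff (μ - ee k) Q = 0)
    {j : Fin (2*r)} (hj : ¬ (j:ℕ) < r) (h2 : μ j ≠ 0) (h3 : coeff (μ - ee j) Q ≠ 0) :
    coeff μ (LL r * Q) < 0 := by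
  classical
  rw [coeff_LL_mul]
  have h : (0:ℝ) < ∑ i : Fin (2*r), -((if (i:ℕ) < r then (1:ℝ) else -1) *
          (if μ i ≠ 0 then coeff (μ - ee i) Q else 0)) := by
    apply Finset.sum_pos'
    · intro k _
      by_cases hk : (k:ℕ) < r
      · rw [if_pos hk, one_mul]
        by_cases hμk : μ k ≠ 0
        · rw [if_pos hμk, h1 k hk hμk, neg_zero]
        · rw [if_neg hμk, neg_zero]
      · rw [if_neg hk, neg_mul, neg_neg, one_mul]
        split
        · exact hnonneg _
        · exact le_refl 0
    · refine ⟨j, Finset.mem_univ j, ?_⟩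
      rw [if_neg hj, neg_mul, neg_neg, one_mul, if_pos h2]
      exact lt_of_le_of_ne (hnonneg _) (Ne.symm h3)
  rw [Finset.sum_neg_distrib] at h
  linarith

end St2

open St2

/-- For `r ≥ 2` and a homogeneous polynomial `Q` in `x₁, …, x_{2r}` with
nonnegative coefficients and at least two monomials, the polynomial
`P = (x₁ + ⋯ + x_r − x_{r+1} − ⋯ − x_{2r}) * Q` has at least `3r − 1` monomials. -/
theorem statement2 (r : ℕ) (hr : 2 ≤ r)
    (Q : MvPolynomial (Fin (2 * r)) ℝ)
    (n : ℕ) (hhom : Q.IsHomogeneous n)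
    (hnonneg : ∀ d, 0 ≤ Q.coeff d)
    (hcard : 2 ≤ Q.support.card) :
    3 * r - 1 ≤
      (((∑ i : Fin (2 * r), C (if (i : ℕ) < r then (1 : ℝ) else -1) * X i) * Q).support).card := by
  classical
  have hLL : (∑ i : Fin (2 * r), C (if (i : ℕ) < r then (1 : ℝ) else -1) * X i) * Q
      = LL r * Q := rfl
  rw [hLL]
  set T := (LL r * Q).support with hT
  have hmemT : ∀ μ, μ ∈ T ↔ coeff μ (LL r * Q) ≠ 0 := fun μ => mem_support_iff
  set S := Q.support with hS
  have hmemS : ∀ x, x ∈ S ↔ coeff x Q ≠ 0 := fun x => mem_support_iff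
  have hSne : S.Nonempty := Finset.card_pos.mp (by omega)
  have hSine : (S.image (dp r)).Nonempty := hSne.image _
  set D := (S.image (dp r)).max' hSine with hD
  set d := (S.image (dp r)).min' hSine with hd
  set SD := S.filter (fun s => dp r s = D) with hSD
  set Sd := S.filter (fun s => dp r s = d) with hSd
  have hleD : ∀ s ∈ S, dp r s ≤ D := fun s hs =>
    Finset.le_max' _ _ (Finset.mem_image_of_mem _ hs)
  have hled : ∀ s ∈ S, d ≤ dp r s := fun s hs =>
    Finset.min'_le _ _ (Finset.mem_image_of_mem _ hs)
  have hSDne : SD.Nonempty := by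
    obtain ⟨a, ha, hda⟩ := Finset.mem_image.mp ((S.image (dp r)).max'_mem hSine)
    exact ⟨a, Finset.mem_filter.mpr ⟨ha, hda⟩⟩
  have hSdne : Sd.Nonempty := by
    obtain ⟨a, ha, hda⟩ := Finset.mem_image.mp ((S.image (dp r)).min'_mem hSine)
    exact ⟨a, Finset.mem_filter.mpr ⟨ha, hda⟩⟩
  have hdD : d ≤ D := le_trans (hled _ hSne.choose_spec) (hleD _ hSne.choose_spec)
  have hVpne : (Vp r).Nonempty := Finset.card_pos.mp (by rw [card_Vp]; omega)
  have hVmne : (Vm r).Nonempty := Finset.card_pos.mp (by rw [card_Vm]; omega)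
  -- dp value on families
  have hdpFSp : ∀ (X : Finset (Fin (2*r) →₀ ℕ)) (c : ℕ), (∀ s ∈ X, dp r s = c) →
      ∀ μ ∈ FS (Vp r) X, dp r μ = c + 1 := by
    intro X c hX μ hμ
    obtain ⟨i, hi, s, hs, rfl⟩ := mem_FS.mp hμ
    rw [dp_add, dp_ee, if_pos (mem_Vp.mp hi), hX s hs]
  have hdpFSm : ∀ (X : Finset (Fin (2*r) →₀ ℕ)) (c : ℕ), (∀ s ∈ X, dp r s = c) →
      ∀ μ ∈ FS (Vm r) X, dp r μ = c := by
    intro X c hX μ hμ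
    obtain ⟨i, hi, s, hs, rfl⟩ := mem_FS.mp hμ
    rw [dp_add, dp_ee, if_neg (mem_Vm.mp hi), hX s hs, add_zero]
  -- top family in support
  have htopT : FS (Vp r) SD ⊆ T := by
    intro μ hμ
    obtain ⟨i, hi, s, hs, rfl⟩ := mem_FS.mp hμ
    obtain ⟨hsS, hsD⟩ := Finset.mem_filter.mp hs
    rw [hmemT]
    refine ne_of_gt (coeff_LL_pos hnonneg ?_ (mem_Vp.mp hi) (add_ee_apply_ne s i) ?_)
    · intro k hk hμk
      by_contra h3
      have hmem : (s + ee i) - ee k ∈ S := (hmemS _).mpr h3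
      have heq : ((s + ee i) - ee k) + ee k = s + ee i := sub_add_ee hμk
      have hdpeq := congrArg (dp r) heq
      rw [dp_add, dp_ee, if_neg hk, dp_add, dp_ee, if_pos (mem_Vp.mp hi), hsD] at hdpeq
      have := hleD _ hmem
      omega
    · rw [add_sub_ee]
      exact (hmemS _).mp hsS
  -- bottom family in support
  have hbotT : FS (Vm r) Sd ⊆ T := by
    intro μ hμ
    obtain ⟨j, hj, s, hs, rfl⟩ := mem_FS.mp hμ
    obtain ⟨hsS, hsd⟩ := Finset.mem_filter.mp hs
    rw [hmemT]
    refine ne_of_lt (coeff_LL_neg hnonneg ?_ (mem_Vm.mp hj) (add_ee_apply_ne s j) ?_)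
    · intro k hk hμk
      by_contra h3
      have hmem : (s + ee j) - ee k ∈ S := (hmemS _).mpr h3
      have heq : ((s + ee j) - ee k) + ee k = s + ee j := sub_add_ee hμk
      have hdpeq := congrArg (dp r) heq
      rw [dp_add, dp_ee, if_pos hk, dp_add, dp_ee, if_neg (mem_Vm.mp hj), hsd] at hdpeq
      have := hled _ hmem
      omega
    · rw [add_sub_ee]
      exact (hmemS _).mp hsS
  -- counting helper
  have hpair : ∀ (F G : Finset (Fin (2*r) →₀ ℕ)), F ⊆ T → G ⊆ T → Disjoint F G →
      F.card + G.card ≤ T.card := by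
    intro F G hF hG hd
    rw [← Finset.card_union_of_disjoint hd]
    exact Finset.card_le_card (Finset.union_subset hF hG)
  have hdisjdp : ∀ (F G : Finset (Fin (2*r) →₀ ℕ)) (cF cG : ℕ),
      (∀ μ ∈ F, dp r μ = cF) → (∀ μ ∈ G, dp r μ = cG) → cF ≠ cG → Disjoint F G := by
    intro F G cF cG hF hG hne
    rw [Finset.disjoint_left]
    intro μ hμF hμG
    exact hne ((hF μ hμF).symm.trans (hG μ hμG))
  have hdpSD : ∀ s ∈ SD, dp r s = D := fun s hs => (Finset.mem_filter.mp hs).2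
  have hdpSd : ∀ s ∈ Sd, dp r s = d := fun s hs => (Finset.mem_filter.mp hs).2
  have hdisjTopBot : Disjoint (FS (Vp r) SD) (FS (Vm r) Sd) :=
    hdisjdp _ _ (D+1) d (hdpFSp _ _ hdpSD) (hdpFSm _ _ hdpSd) (by omega)
  have key : 3 * r ≤ T.card + 1 := by
    rcases Nat.lt_or_ge SD.card 2 with hSD2 | hSD2 <;>
      rcases Nat.lt_or_ge Sd.card 2 with hSd2 | hSd2
    · -- both singletons : the hard case
      have hSD1 : SD.card = 1 := by have := Finset.card_pos.mpr hSDne; omega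
      have hSd1 : Sd.card = 1 := by have := Finset.card_pos.mpr hSdne; omega
      obtain ⟨a, haeq⟩ := Finset.card_eq_one.mp hSD1
      obtain ⟨b, hbeq⟩ := Finset.card_eq_one.mp hSd1
      have haS : a ∈ S ∧ dp r a = D := by
        have : a ∈ SD := by rw [haeq]; exact Finset.mem_singleton_self a
        exact Finset.mem_filter.mp this
      have hdltD : d < D := by
        rcases Nat.lt_or_ge d D with h | h
        · exact h
        · exfalso
          have hdeq : d = D := le_antisymm hdD (hD ▸ h)
          obtain ⟨u, hu, v, hv, huv⟩ := Finset.one_lt_card.mp hcard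
          have hu' : u ∈ SD := Finset.mem_filter.mpr
            ⟨hu, le_antisymm (hleD u hu) (hdeq ▸ hled u hu)⟩
          have hv' : v ∈ SD := Finset.mem_filter.mpr
            ⟨hv, le_antisymm (hleD v hv) (hdeq ▸ hled v hv)⟩
          rw [haeq, Finset.mem_singleton] at hu' hv'
          exact huv (hu'.trans hv'.symm)
      set Z := (Vm r).filter (fun j => coeff (a + ee j) (LL r * Q) = 0) with hZdef
      have hwit : ∀ j : {x // x ∈ Z}, ∃ i : Fin (2*r), (i:ℕ) < r ∧ (a + ee j.1) i ≠ 0 ∧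
          coeff ((a + ee j.1) - ee i) Q ≠ 0 := by
        rintro ⟨j, hj⟩
        obtain ⟨hjVm, hjzero⟩ := Finset.mem_filter.mp hj
        by_contra hno
        push_neg at hno
        have hlt := coeff_LL_neg hnonneg (fun k hk hμk => hno k hk hμk)
          (mem_Vm.mp hjVm) (add_ee_apply_ne a j) (by
            rw [add_sub_ee]; exact (hmemS a).mp haS.1)
        rw [hjzero] at hlt
        exact lt_irrefl 0 hlt
      choose wi hwi1 hwi2 hwi3 using hwit
      set W := Z.attach.image (fun j => (a + ee j.1) - ee (wi j)) with hWdef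
      have hWmem : ∀ s ∈ W, s ∈ S ∧ dp r s + 1 = D := by
        intro s hs
        obtain ⟨j, hjZ, rfl⟩ := Finset.mem_image.mp hs
        refine ⟨(hmemS _).mpr (hwi3 j), ?_⟩
        have heq : ((a + ee j.1) - ee (wi j)) + ee (wi j) = a + ee j.1 := sub_add_ee (hwi2 j)
        have hdpeq := congrArg (dp r) heq
        have hjVm : ¬ (j.1:ℕ) < r := mem_Vm.mp (Finset.mem_filter.mp j.2).1
        rw [dp_add, dp_ee, if_pos (hwi1 j), dp_add, dp_ee, if_neg hjVm, haS.2, add_zero]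
          at hdpeq
        omega
      have hWlayer : ∀ s ∈ W, dp r s = D - 1 := fun s hs => by
        have := (hWmem s hs).2; omega
      have hWcard : Z.card ≤ W.card := by
        have hinj : Set.InjOn (fun j : {x // x ∈ Z} => (a + ee j.1) - ee (wi j))
            Z.attach := by
          intro j _ j' _ heq
          simp only at heq
          have hc1 : ((a + ee j.1) - ee (wi j)) + ee (wi j) = a + ee j.1 := sub_add_ee (hwi2 j)
          have hc2 : ((a + ee j'.1) - ee (wi j')) + ee (wi j') = a + ee j'.1 :=
            sub_add_ee (hwi2 j')
          have hkey : ee j.1 + ee (wi j') = ee j'.1 + ee (wi j) := by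
            have e1 : (a + ee j.1) + ee (wi j') = (a + ee j'.1) + ee (wi j) := by
              rw [← hc1, ← hc2, heq]
              exact add_right_comm _ _ _
            have e2 : a + (ee j.1 + ee (wi j')) = a + (ee j'.1 + ee (wi j)) := by
              rw [← add_assoc, ← add_assoc]; exact e1
            exact add_left_cancel e2
          have hcoord := congrArg (fun f : Fin (2*r) →₀ ℕ => f j.1) hkey
          have hjVm : ¬ (j.1:ℕ) < r := mem_Vm.mp (Finset.mem_filter.mp j.2).1
          have hne1 : wi j' ≠ j.1 := fun h => hjVm (h ▸ hwi1 j')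
          have hne2 : wi j ≠ j.1 := fun h => hjVm (h ▸ hwi1 j)
          have hj1 : j.1 = j'.1 := by
            by_contra hcc
            have hcc' : j'.1 ≠ j.1 := fun h => hcc h.symm
            simp [ee, Finsupp.single_apply, hne1, hne2, hcc'] at hcoord
          exact Subtype.ext hj1
        rw [hWdef, Finset.card_image_of_injOn hinj, Finset.card_attach]        
      set Zimg := Z.image (fun j => a + ee j) with hZimgdef
      set Mid := FS (Vp r) W \ Zimg with hMiddef
      have hMidT : Mid ⊆ T := by
        intro μ hμ
        obtain ⟨hμFS, hμZ⟩ := Finset.mem_sdiff.mp hμ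
        obtain ⟨i, hi, s, hs, rfl⟩ := mem_FS.mp hμFS
        rw [hmemT]
        by_cases hcase : ∃ j ∈ Vm r, s + ee i = a + ee j
        · obtain ⟨j, hjVm, heq⟩ := hcase
          have hjZ : j ∉ Z := fun hjZ =>
            hμZ (Finset.mem_image.mpr ⟨j, hjZ, heq.symm⟩)
          have hne : coeff (a + ee j) (LL r * Q) ≠ 0 := fun h0 =>
            hjZ (Finset.mem_filter.mpr ⟨hjVm, h0⟩)
          rwa [← heq] at hne
        · refine ne_of_gt (coeff_LL_pos hnonneg ?_ (mem_Vp.mp hi) (add_ee_apply_ne s i) ?_)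
          · intro k hk hμk
            by_contra h3
            have hmem : (s + ee i) - ee k ∈ S := (hmemS _).mpr h3
            have heq : ((s + ee i) - ee k) + ee k = s + ee i := sub_add_ee hμk
            have hdpeq := congrArg (dp r) heq
            rw [dp_add, dp_ee, if_neg hk, add_zero, dp_add, dp_ee,
              if_pos (mem_Vp.mp hi)] at hdpeq
            have hdps : dp r s + 1 = D := (hWmem s hs).2
            have hmemSD : (s + ee i) - ee k ∈ SD :=
              Finset.mem_filter.mpr ⟨hmem, by omega⟩
            rw [haeq, Finset.mem_singleton] at hmemSD
            exact hcase ⟨k, mem_Vm.mpr hk, by rw [← hmemSD]; exact heq.symm⟩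
          · rw [add_sub_ee]; exact (hmemS _).mp (hWmem s hs).1
      -- triple union counting
      have htriple : ∀ (F G H : Finset (Fin (2*r) →₀ ℕ)), F ⊆ T → G ⊆ T → H ⊆ T →
          Disjoint F G → Disjoint F H → Disjoint G H →
          F.card + G.card + H.card ≤ T.card := by
        intro F G H hF hG hH h1 h2 h3
        have hsub : (F ∪ G) ∪ H ⊆ T :=
          Finset.union_subset (Finset.union_subset hF hG) hH
        have hc1 : ((F ∪ G) ∪ H).card = (F ∪ G).card + H.card :=
          Finset.card_union_of_disjoint (Finset.disjoint_union_left.mpr ⟨h2, h3⟩)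
        have hc2 : (F ∪ G).card = F.card + G.card := Finset.card_union_of_disjoint h1
        have := Finset.card_le_card hsub
        omega
      have hcF1 : (FS (Vp r) SD).card = r := by rw [haeq, card_FS_singleton, card_Vp]
      have hcF3 : (FS (Vm r) Sd).card = r := by rw [hbeq, card_FS_singleton, card_Vm]
      rcases Nat.eq_zero_or_pos Z.card with hZ0 | hZpos
      · -- no cancellation on a + E⁻ : use family a + E⁻
        have hZempty : Z = ∅ := Finset.card_eq_zero.mp hZ0
        have hF2T : FS (Vm r) SD ⊆ T := by
          intro μ hμ
          obtain ⟨j, hj, s, hs, rfl⟩ := mem_FS.mp hμ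
          rw [haeq, Finset.mem_singleton] at hs
          subst hs
          rw [hmemT]
          intro h0
          have : j ∈ Z := Finset.mem_filter.mpr ⟨hj, h0⟩
          rw [hZempty] at this
          exact absurd this (Finset.notMem_empty j)
        have hcF2 : (FS (Vm r) SD).card = r := by rw [haeq, card_FS_singleton, card_Vm]
        have hd1 : Disjoint (FS (Vp r) SD) (FS (Vm r) SD) :=
          hdisjdp _ _ (D+1) D (hdpFSp _ _ hdpSD) (hdpFSm _ _ hdpSD) (by omega)
        have hd3 : Disjoint (FS (Vm r) SD) (FS (Vm r) Sd) :=
          hdisjdp _ _ D d (hdpFSm _ _ hdpSD) (hdpFSm _ _ hdpSd) (by omega)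
        have := htriple _ _ _ htopT hF2T hbotT hd1 hdisjTopBot hd3
        omega
      · -- some cancellation : use the middle family Mid
        have hWne : W.Nonempty := Finset.card_pos.mp (lt_of_lt_of_le hZpos hWcard)
        have hL1W : W.card + r ≤ (FS (Vp r) W).card + 1 := by
          have := L1 hVpne hWne
          rwa [card_Vp] at this
        have himg : Zimg.card ≤ Z.card := Finset.card_image_le
        have hsd : (FS (Vp r) W).card - Zimg.card ≤ Mid.card := Finset.le_card_sdiff _ _
        have hMidlayer : ∀ μ ∈ Mid, dp r μ = (D - 1) + 1 := by
          intro μ hμ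
          exact hdpFSp W (D-1) hWlayer μ (Finset.mem_sdiff.mp hμ).1
        have hd1 : Disjoint (FS (Vp r) SD) Mid :=
          hdisjdp _ _ (D+1) ((D-1)+1) (hdpFSp _ _ hdpSD) hMidlayer (by omega)
        have hd3 : Disjoint Mid (FS (Vm r) Sd) :=
          hdisjdp _ _ ((D-1)+1) d hMidlayer (hdpFSm _ _ hdpSd) (by omega)
        have := htriple _ _ _ htopT hMidT hbotT hd1 hdisjTopBot hd3
        omega
    · -- SD singleton, Sd big
      have hSD1 : SD.card = 1 := by
        have := Finset.card_pos.mpr hSDne; omega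
      obtain ⟨a, haeq⟩ := Finset.card_eq_one.mp hSD1
      have hc1 : (FS (Vp r) SD).card = r := by
        rw [haeq, card_FS_singleton, card_Vp]
      have hc2 : 2 * r ≤ (FS (Vm r) Sd).card + 1 := by
        have := L2 (I := Vm r) hSd2
        rwa [card_Vm] at this
      have := hpair _ _ htopT hbotT hdisjTopBot
      omega
    · -- SD big, Sd singleton
      have hSd1 : Sd.card = 1 := by
        have := Finset.card_pos.mpr hSdne; omega
      obtain ⟨b, hbeq⟩ := Finset.card_eq_one.mp hSd1
      have hc2 : (FS (Vm r) Sd).card = r := by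
        rw [hbeq, card_FS_singleton, card_Vm]
      have hc1 : 2 * r ≤ (FS (Vp r) SD).card + 1 := by
        have := L2 (I := Vp r) hSD2
        rwa [card_Vp] at this
      have := hpair _ _ htopT hbotT hdisjTopBot
      omega
    · -- both big
      have hc1 : 2 * r ≤ (FS (Vp r) SD).card + 1 := by
        have := L2 (I := Vp r) hSD2
        rwa [card_Vp] at this
      have hc2 : 2 * r ≤ (FS (Vm r) Sd).card + 1 := by
        have := L2 (I := Vm r) hSd2
        rwa [card_Vm] at this
      have := hpair _ _ htopT hbotT hdisjTopBot
      omega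
  omega
end

section
/- Let Q be a homogeneous real polynomial in the variables x₁, …, x₆ all of whose coefficients are nonnegative and with n(Q) ≥ 2. Then the polynomial P = (x₁ + x₂ + x₃ − x₄ − x₅ − x₆) · Q satisfies n(P) ≥ 9. -/
open MvPolynomial Finset

namespace Statement3Aux

noncomputable section
open scoped Classical

abbrev Idx := Fin 6
abbrev Mon := Fin 6 →₀ ℕ

def ee (j : Idx) : Mon := Finsupp.single j 1

lemma ee_apply (j l : Idx) : ee j l = if j = l then 1 else 0 := Finsupp.single_apply

def phi (m : Mon) : ℕ := m 0 + m 1 + m 2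

lemma add_ee_apply (m : Mon) (j l : Idx) :
    (m + ee j) l = m l + if j = l then 1 else 0 := by
  simp [ee, Finsupp.add_apply, Finsupp.single_apply]

lemma phi_add_lo (m : Mon) (j : Idx) (hj : (j : ℕ) < 3) :
    phi (m + ee j) = phi m + 1 := by
  have h0 := add_ee_apply m j 0
  have h1 := add_ee_apply m j 1
  have h2 := add_ee_apply m j 2
  unfold phi
  fin_cases j <;> simp_all <;> omega

lemma phi_add_hi (m : Mon) (j : Idx) (hj : 3 ≤ (j : ℕ)) :
    phi (m + ee j) = phi m := by
  have h0 := add_ee_apply m j 0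
  have h1 := add_ee_apply m j 1
  have h2 := add_ee_apply m j 2
  unfold phi
  fin_cases j <;> simp_all

lemma ee_inj {j k : Idx} (h : ee j = ee k) : j = k := by
  by_contra hne
  have := DFunLike.congr_fun h j
  simp [ee, Finsupp.single_apply, Ne.symm hne] at this

lemma add_ee_cancel {m m' : Mon} {j : Idx} (h : m + ee j = m' + ee j) : m = m' := by
  ext l
  have := DFunLike.congr_fun h l
  simp [Finsupp.add_apply] at this
  omega

lemma add_ee_ne (m : Mon) {j k : Idx} (h : j ≠ k) : m + ee j ≠ m + ee k := by
  intro hh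
  exact h (ee_inj (add_left_cancel hh))

def sh3 (X : Finset Mon) (i j k : Idx) : Finset Mon :=
  X.image (· + ee i) ∪ X.image (· + ee j) ∪ X.image (· + ee k)

lemma mem_sh3 {X : Finset Mon} {i j k : Idx} {x : Mon} :
    x ∈ sh3 X i j k ↔ ∃ m ∈ X, x = m + ee i ∨ x = m + ee j ∨ x = m + ee k := by
  simp only [sh3, mem_union, mem_image]
  constructor
  · rintro ((⟨m, hm, rfl⟩ | ⟨m, hm, rfl⟩) | ⟨m, hm, rfl⟩)
    · exact ⟨m, hm, Or.inl rfl⟩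
    · exact ⟨m, hm, Or.inr (Or.inl rfl)⟩
    · exact ⟨m, hm, Or.inr (Or.inr rfl)⟩
  · rintro ⟨m, hm, (rfl | rfl | rfl)⟩
    · exact Or.inl (Or.inl ⟨m, hm, rfl⟩)
    · exact Or.inl (Or.inr ⟨m, hm, rfl⟩)
    · exact Or.inr ⟨m, hm, rfl⟩

lemma card_sh3 (X : Finset Mon) (hX : X.Nonempty) (i j k : Idx)
    (hij : i ≠ j) (hik : i ≠ k) (hjk : j ≠ k) :
    X.card + 2 ≤ (sh3 X i j k).card := by
  obtain ⟨v, hv, hmax⟩ := X.exists_max_image (fun m => m j + m k) hX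
  have hIm : X.image (· + ee i) ⊆ sh3 X i j k := by
    intro x hx
    obtain ⟨m, hm, rfl⟩ := mem_image.1 hx
    exact mem_sh3.2 ⟨m, hm, Or.inl rfl⟩
  have hnotj : v + ee j ∉ X.image (· + ee i) := by
    intro hmem
    obtain ⟨m, hm, heq⟩ := mem_image.1 hmem
    have hj' := DFunLike.congr_fun heq j
    have hk' := DFunLike.congr_fun heq k
    rw [add_ee_apply, add_ee_apply] at hj' hk'
    have hmj := hmax m hm
    simp [hij, hik, hjk] at hj' hk'
    omega
  have hnotk : v + ee k ∉ X.image (· + ee i) := by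
    intro hmem
    obtain ⟨m, hm, heq⟩ := mem_image.1 hmem
    have hj' := DFunLike.congr_fun heq j
    have hk' := DFunLike.congr_fun heq k
    rw [add_ee_apply, add_ee_apply] at hj' hk'
    have hmj := hmax m hm
    simp [hij, hik, Ne.symm hjk] at hj' hk'
    omega
  have hne2 : v + ee j ≠ v + ee k := add_ee_ne v hjk
  have hins : insert (v + ee j) (insert (v + ee k) (X.image (· + ee i))) ⊆ sh3 X i j k := by
    intro x hx
    rcases mem_insert.1 hx with rfl | hx
    · exact mem_sh3.2 ⟨v, hv, Or.inr (Or.inl rfl)⟩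
    rcases mem_insert.1 hx with rfl | hx
    · exact mem_sh3.2 ⟨v, hv, Or.inr (Or.inr rfl)⟩
    · exact hIm hx
  have hcard : (insert (v + ee j) (insert (v + ee k) (X.image (· + ee i)))).card
      = X.card + 2 := by
    rw [card_insert_of_notMem, card_insert_of_notMem, card_image_of_injective _ (add_left_injective _)]
    · exact hnotk
    · intro hmem
      rcases mem_insert.1 hmem with hh | hh
      · exact hne2 hh
      · exact hnotj hh
  calc X.card + 2 = _ := hcard.symm
    _ ≤ _ := card_le_card hins


-- the collision lemma
lemma collision {m m' : Mon} {r s r' s' : Idx} (hmm : m ≠ m')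
    (h1 : m + ee r = m' + ee s) (h2 : m + ee r' = m' + ee s') :
    m + ee r = m + ee r' := by
  by_cases hrr : r = r'
  · rw [hrr]
  · exfalso
    have key : ∀ l : Idx, (ee r) l + (ee s') l = (ee r') l + (ee s) l := by
      intro l
      have e1 := DFunLike.congr_fun h1 l
      have e2 := DFunLike.congr_fun h2 l
      simp only [Finsupp.add_apply] at e1 e2
      omega
    have hk := key r
    rw [ee_apply, ee_apply, ee_apply, ee_apply] at hk
    simp [Ne.symm hrr] at hk
    -- hk : 1 + (if s' = r then 1 else 0) = if s = r then 1 else 0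
    have hsr : s = r := by
      by_contra hh
      rw [if_neg hh] at hk
      split at hk <;> omega
    subst hsr
    have : m = m' := by
      have := h1
      rwa [add_right_cancel_iff] at this
    exact hmm this

lemma card_sh3_pair {m m' : Mon} (hmm : m ≠ m') (i j k : Idx)
    (hij : i ≠ j) (hik : i ≠ k) (hjk : j ≠ k) :
    5 ≤ (sh3 ({m, m'} : Finset Mon) i j k).card := by
  set Im : Finset Mon := {m + ee i, m + ee j, m + ee k} with hIm
  set Im' : Finset Mon := {m' + ee i, m' + ee j, m' + ee k} with hIm'
  have hU : sh3 ({m, m'} : Finset Mon) i j k = Im ∪ Im' := by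
    ext x
    simp only [mem_sh3, mem_insert, mem_singleton, mem_union, hIm, hIm']
    constructor
    · rintro ⟨mm, (rfl | rfl), hx⟩
      · exact Or.inl (by tauto)
      · exact Or.inr (by tauto)
    · rintro (hx | hx)
      · exact ⟨m, Or.inl rfl, by tauto⟩
      · exact ⟨m', Or.inr rfl, by tauto⟩
  have cIm : Im.card = 3 := by
    rw [hIm, card_insert_of_notMem, card_insert_of_notMem, card_singleton]
    · simp [add_ee_ne m hjk]
    · simp [add_ee_ne m hij, add_ee_ne m hik]
  have cIm' : Im'.card = 3 := by
    rw [hIm', card_insert_of_notMem, card_insert_of_notMem, card_singleton]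
    · simp [add_ee_ne m' hjk]
    · simp [add_ee_ne m' hij, add_ee_ne m' hik]
  have hint : (Im ∩ Im').card ≤ 1 := by
    apply card_le_one.2
    intro x hx y hy
    obtain ⟨hx1, hx2⟩ := mem_inter.1 hx
    obtain ⟨hy1, hy2⟩ := mem_inter.1 hy
    have hx1' : ∃ r : Idx, x = m + ee r := by
      rcases mem_insert.1 hx1 with h | h
      · exact ⟨i, h⟩
      rcases mem_insert.1 h with h | h
      · exact ⟨j, h⟩
      · exact ⟨k, mem_singleton.1 h⟩
    have hx2' : ∃ s : Idx, x = m' + ee s := by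
      rcases mem_insert.1 hx2 with h | h
      · exact ⟨i, h⟩
      rcases mem_insert.1 h with h | h
      · exact ⟨j, h⟩
      · exact ⟨k, mem_singleton.1 h⟩
    have hy1' : ∃ r : Idx, y = m + ee r := by
      rcases mem_insert.1 hy1 with h | h
      · exact ⟨i, h⟩
      rcases mem_insert.1 h with h | h
      · exact ⟨j, h⟩
      · exact ⟨k, mem_singleton.1 h⟩
    have hy2' : ∃ s : Idx, y = m' + ee s := by
      rcases mem_insert.1 hy2 with h | h
      · exact ⟨i, h⟩
      rcases mem_insert.1 h with h | h
      · exact ⟨j, h⟩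
      · exact ⟨k, mem_singleton.1 h⟩
    obtain ⟨r, rfl⟩ := hx1'
    obtain ⟨s, hs⟩ := hx2'
    obtain ⟨r', rfl⟩ := hy1'
    obtain ⟨s', hs'⟩ := hy2'
    exact collision hmm hs hs'
  have := card_union_add_card_inter Im Im'
  have hle := card_le_card (le_of_eq hU.symm)
  omega


section Poly
variable (Q : MvPolynomial (Fin 6) ℝ)

lemma coeff_LQ (d : Mon) :
    ((X 0 + X 1 + X 2 - X 3 - X 4 - X 5 : MvPolynomial (Fin 6) ℝ) * Q).coeff d =
      (coeff d (X 0 * Q) + coeff d (X 1 * Q) + coeff d (X 2 * Q))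
        - (coeff d (X 3 * Q) + coeff d (X 4 * Q) + coeff d (X 5 * Q)) := by
  have h : (X 0 + X 1 + X 2 - X 3 - X 4 - X 5 : MvPolynomial (Fin 6) ℝ) * Q
      = (X 0 * Q + X 1 * Q + X 2 * Q) - (X 3 * Q + X 4 * Q + X 5 * Q) := by ring
  rw [h, coeff_sub, coeff_add, coeff_add, coeff_add, coeff_add]

lemma idx_lt3 {a : Idx} (ha : (a : ℕ) < 3) : a = 0 ∨ a = 1 ∨ a = 2 := by
  fin_cases a <;> revert ha <;> decide

lemma idx_ge3 {b : Idx} (hb : 3 ≤ (b : ℕ)) : b = 3 ∨ b = 4 ∨ b = 5 := by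
  fin_cases b <;> revert hb <;> decide

lemma cf_nonneg (hnonneg : ∀ d, 0 ≤ Q.coeff d) (j : Idx) (d : Mon) :
    0 ≤ coeff d (X j * Q) := by
  rw [coeff_X_mul']
  split
  · exact hnonneg _
  · exact le_refl _

lemma cf_self (m : Mon) (j : Idx) : coeff (m + ee j) (X j * Q) = Q.coeff m := by
  have h : m + ee j = Finsupp.single j 1 + m := by rw [add_comm]; rfl
  rw [h, coeff_X_mul]

lemma cf_zero (d : Mon) (j : Idx) (h : ∀ y ∈ Q.support, y + ee j ≠ d) :
    coeff d (X j * Q) = 0 := by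
  rw [coeff_X_mul']
  split
  · next hd =>
    by_contra hne
    have hyS : d - Finsupp.single j 1 ∈ Q.support := mem_support_iff.2 hne
    apply h _ hyS
    show d - Finsupp.single j 1 + ee j = d
    have hle : Finsupp.single j 1 ≤ d := by
      rw [Finsupp.single_le_iff]
      exact Nat.one_le_iff_ne_zero.2 (Finsupp.mem_support_iff.1 hd)
    exact tsub_add_cancel_of_le hle
  · rfl

lemma coeff_pos (hnonneg : ∀ d, 0 ≤ Q.coeff d) (m : Mon) (hm : m ∈ Q.support) : 0 < Q.coeff m :=
  lt_of_le_of_ne (hnonneg m) (Ne.symm (mem_support_iff.1 hm))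

lemma posSurv (hnonneg : ∀ d, 0 ≤ Q.coeff d) (m : Mon) (hm : m ∈ Q.support) (a : Idx) (ha : (a : ℕ) < 3)
    (h : ∀ b : Idx, 3 ≤ (b : ℕ) → ∀ y ∈ Q.support, y + ee b ≠ m + ee a) :
    m + ee a ∈ ((X 0 + X 1 + X 2 - X 3 - X 4 - X 5 : MvPolynomial (Fin 6) ℝ) * Q).support := by
  rw [mem_support_iff, coeff_LQ]
  have h3 := cf_zero Q (m + ee a) 3 (h 3 (by decide))
  have h4 := cf_zero Q (m + ee a) 4 (h 4 (by decide))
  have h5 := cf_zero Q (m + ee a) 5 (h 5 (by decide))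
  rw [h3, h4, h5]
  have hp := coeff_pos Q hnonneg m hm
  have n0 := cf_nonneg Q hnonneg 0 (m + ee a)
  have n1 := cf_nonneg Q hnonneg 1 (m + ee a)
  have n2 := cf_nonneg Q hnonneg 2 (m + ee a)
  have key : 0 < coeff (m + ee a) (X 0 * Q) + coeff (m + ee a) (X 1 * Q)
      + coeff (m + ee a) (X 2 * Q) := by
    rcases idx_lt3 ha with rfl | rfl | rfl
    · rw [cf_self Q m 0]; linarith
    · rw [cf_self Q m 1]; linarith
    · rw [cf_self Q m 2]; linarith
  intro hh
  rw [sub_eq_zero] at hh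
  linarith

lemma negSurv (hnonneg : ∀ d, 0 ≤ Q.coeff d) (m : Mon) (hm : m ∈ Q.support) (b : Idx) (hb : 3 ≤ (b : ℕ))
    (h : ∀ a : Idx, (a : ℕ) < 3 → ∀ y ∈ Q.support, y + ee a ≠ m + ee b) :
    m + ee b ∈ ((X 0 + X 1 + X 2 - X 3 - X 4 - X 5 : MvPolynomial (Fin 6) ℝ) * Q).support := by
  rw [mem_support_iff, coeff_LQ]
  have h0 := cf_zero Q (m + ee b) 0 (h 0 (by decide))
  have h1 := cf_zero Q (m + ee b) 1 (h 1 (by decide))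
  have h2 := cf_zero Q (m + ee b) 2 (h 2 (by decide))
  rw [h0, h1, h2]
  have hp := coeff_pos Q hnonneg m hm
  have n3 := cf_nonneg Q hnonneg 3 (m + ee b)
  have n4 := cf_nonneg Q hnonneg 4 (m + ee b)
  have n5 := cf_nonneg Q hnonneg 5 (m + ee b)
  have key : 0 < coeff (m + ee b) (X 3 * Q) + coeff (m + ee b) (X 4 * Q)
      + coeff (m + ee b) (X 5 * Q) := by
    rcases idx_ge3 hb with rfl | rfl | rfl
    · rw [cf_self Q m 3]; linarith
    · rw [cf_self Q m 4]; linarith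
    · rw [cf_self Q m 5]; linarith
  intro hh
  rw [sub_eq_zero] at hh
  linarith

end Poly


section Comb
variable {S T : Finset Mon}

def HPos (S T : Finset Mon) : Prop := ∀ m ∈ S, ∀ a : Idx, (a : ℕ) < 3 →
  (∀ b : Idx, 3 ≤ (b : ℕ) → ∀ y ∈ S, y + ee b ≠ m + ee a) → m + ee a ∈ T

def HNeg (S T : Finset Mon) : Prop := ∀ m ∈ S, ∀ b : Idx, 3 ≤ (b : ℕ) →
  (∀ a : Idx, (a : ℕ) < 3 → ∀ y ∈ S, y + ee a ≠ m + ee b) → m + ee b ∈ T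

def tS (S : Finset Mon) (h : S.Nonempty) : ℕ := S.sup' h phi
def pS (S : Finset Mon) (h : S.Nonempty) : ℕ := S.inf' h phi
def DS (S : Finset Mon) (h : S.Nonempty) (j : Idx) : ℕ := S.sup' h (fun m => m j)
def StS (S : Finset Mon) (h : S.Nonempty) : Finset Mon := S.filter (fun m => phi m = tS S h)
def SpS (S : Finset Mon) (h : S.Nonempty) : Finset Mon := S.filter (fun m => phi m = pS S h)
def chA (S : Finset Mon) (h : S.Nonempty) (a : Idx) : Finset Mon :=
  S.filter (fun m => m a = DS S h a ∧ phi m ≠ tS S h)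
def chB (S : Finset Mon) (h : S.Nonempty) (b : Idx) : Finset Mon :=
  S.filter (fun m => m b = DS S h b ∧ phi m ≠ pS S h)
def MsA (S : Finset Mon) (h : S.Nonempty) : Finset Mon :=
  (chA S h 0).image (· + ee 0) ∪ (chA S h 1).image (· + ee 1) ∪ (chA S h 2).image (· + ee 2)
def MsB (S : Finset Mon) (h : S.Nonempty) : Finset Mon :=
  (chB S h 3).image (· + ee 3) ∪ (chB S h 4).image (· + ee 4) ∪ (chB S h 5).image (· + ee 5)

lemma phi_le_t (h : S.Nonempty) {m : Mon} (hm : m ∈ S) : phi m ≤ tS S h := le_sup' phi hm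
lemma p_le_phi (h : S.Nonempty) {m : Mon} (hm : m ∈ S) : pS S h ≤ phi m := inf'_le phi hm
lemma coord_le_D (h : S.Nonempty) {m : Mon} (hm : m ∈ S) (j : Idx) : m j ≤ DS S h j :=
  le_sup' (fun m => m j) hm
lemma p_le_t (h : S.Nonempty) : pS S h ≤ tS S h := by
  obtain ⟨m, hm⟩ := h
  exact le_trans (p_le_phi ⟨m, hm⟩ hm) (phi_le_t ⟨m, hm⟩ hm)
lemma St_ne (h : S.Nonempty) : (StS S h).Nonempty := by
  obtain ⟨m, hm, hts⟩ := exists_mem_eq_sup' h phi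
  exact ⟨m, mem_filter.2 ⟨hm, hts.symm⟩⟩
lemma Sp_ne (h : S.Nonempty) : (SpS S h).Nonempty := by
  obtain ⟨m, hm, hts⟩ := exists_mem_eq_inf' h phi
  exact ⟨m, mem_filter.2 ⟨hm, hts.symm⟩⟩
lemma exists_D (h : S.Nonempty) (j : Idx) : ∃ m ∈ S, m j = DS S h j := by
  obtain ⟨m, hm, hts⟩ := exists_mem_eq_sup' h (fun m => m j)
  exact ⟨m, hm, hts.symm⟩

lemma mem_MsA {h : S.Nonempty} {x : Mon} :
    x ∈ MsA S h ↔ ∃ a : Idx, (a : ℕ) < 3 ∧ ∃ m ∈ chA S h a, x = m + ee a := by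
  constructor
  · intro hx
    rcases mem_union.1 hx with hx | hx
    · rcases mem_union.1 hx with hx | hx
      · obtain ⟨m, hm, rfl⟩ := mem_image.1 hx
        exact ⟨0, by decide, m, hm, rfl⟩
      · obtain ⟨m, hm, rfl⟩ := mem_image.1 hx
        exact ⟨1, by decide, m, hm, rfl⟩
    · obtain ⟨m, hm, rfl⟩ := mem_image.1 hx
      exact ⟨2, by decide, m, hm, rfl⟩
  · rintro ⟨a, ha, m, hm, rfl⟩
    rcases idx_lt3 ha with rfl | rfl | rfl
    · exact mem_union.2 (Or.inl (mem_union.2 (Or.inl (mem_image.2 ⟨m, hm, rfl⟩))))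
    · exact mem_union.2 (Or.inl (mem_union.2 (Or.inr (mem_image.2 ⟨m, hm, rfl⟩))))
    · exact mem_union.2 (Or.inr (mem_image.2 ⟨m, hm, rfl⟩))

lemma mem_MsB {h : S.Nonempty} {x : Mon} :
    x ∈ MsB S h ↔ ∃ b : Idx, 3 ≤ (b : ℕ) ∧ ∃ m ∈ chB S h b, x = m + ee b := by
  constructor
  · intro hx
    rcases mem_union.1 hx with hx | hx
    · rcases mem_union.1 hx with hx | hx
      · obtain ⟨m, hm, rfl⟩ := mem_image.1 hx
        exact ⟨3, by decide, m, hm, rfl⟩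
      · obtain ⟨m, hm, rfl⟩ := mem_image.1 hx
        exact ⟨4, by decide, m, hm, rfl⟩
    · obtain ⟨m, hm, rfl⟩ := mem_image.1 hx
      exact ⟨5, by decide, m, hm, rfl⟩
  · rintro ⟨b, hb, m, hm, rfl⟩
    rcases idx_ge3 hb with rfl | rfl | rfl
    · exact mem_union.2 (Or.inl (mem_union.2 (Or.inl (mem_image.2 ⟨m, hm, rfl⟩))))
    · exact mem_union.2 (Or.inl (mem_union.2 (Or.inr (mem_image.2 ⟨m, hm, rfl⟩))))
    · exact mem_union.2 (Or.inr (mem_image.2 ⟨m, hm, rfl⟩))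

-- phi values of the classes
lemma Top_phi (h : S.Nonempty) : ∀ x ∈ sh3 (StS S h) 0 1 2, phi x = tS S h + 1 := by
  intro x hx
  obtain ⟨m, hm, hcase⟩ := mem_sh3.1 hx
  have hmt : phi m = tS S h := (mem_filter.1 hm).2
  rcases hcase with rfl | rfl | rfl <;> rw [phi_add_lo _ _ (by decide), hmt]

lemma Bot_phi (h : S.Nonempty) : ∀ x ∈ sh3 (SpS S h) 3 4 5, phi x = pS S h := by
  intro x hx
  obtain ⟨m, hm, hcase⟩ := mem_sh3.1 hx
  have hmt : phi m = pS S h := (mem_filter.1 hm).2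
  rcases hcase with rfl | rfl | rfl <;> rw [phi_add_hi _ _ (by decide), hmt]

lemma MsA_phi (h : S.Nonempty) : ∀ x ∈ MsA S h, pS S h < phi x ∧ phi x ≤ tS S h := by
  intro x hx
  obtain ⟨a, ha, m, hm, rfl⟩ := mem_MsA.1 hx
  obtain ⟨hmS, _, hmne⟩ := mem_filter.1 hm
  have h1 : phi (m + ee a) = phi m + 1 := phi_add_lo _ _ ha
  have h2 := phi_le_t h hmS
  have h3 := p_le_phi h hmS
  omega

lemma MsB_phi (h : S.Nonempty) : ∀ x ∈ MsB S h, pS S h < phi x ∧ phi x ≤ tS S h := by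
  intro x hx
  obtain ⟨b, hb, m, hm, rfl⟩ := mem_MsB.1 hx
  obtain ⟨hmS, _, hmne⟩ := mem_filter.1 hm
  have h1 : phi (m + ee b) = phi m := phi_add_hi _ _ hb
  have h2 := phi_le_t h hmS
  have h3 := p_le_phi h hmS
  omega

lemma disjoint_of_phi {U V : Finset Mon} (h : ∀ x ∈ U, ∀ y ∈ V, phi x ≠ phi y) :
    Disjoint U V := by
  rw [disjoint_left]
  intro x hU hV
  exact h x hU x hV rfl

-- subset lemmas
lemma Top_sub (h : S.Nonempty) (hpos : HPos S T) : sh3 (StS S h) 0 1 2 ⊆ T := by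
  intro x hx
  obtain ⟨m, hm, hcase⟩ := mem_sh3.1 hx
  obtain ⟨hmS, hmt⟩ := mem_filter.1 hm
  have main : ∀ a : Idx, (a : ℕ) < 3 → m + ee a ∈ T := by
    intro a ha
    apply hpos m hmS a ha
    intro b hb y hy heq
    have h1 : phi (y + ee b) = phi y := phi_add_hi _ _ hb
    have h2 : phi (m + ee a) = phi m + 1 := phi_add_lo _ _ ha
    rw [heq, h2, hmt] at h1
    have h3 := phi_le_t h hy
    omega
  rcases hcase with rfl | rfl | rfl
  · exact main 0 (by decide)
  · exact main 1 (by decide)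
  · exact main 2 (by decide)

lemma Bot_sub (h : S.Nonempty) (hneg : HNeg S T) : sh3 (SpS S h) 3 4 5 ⊆ T := by
  intro x hx
  obtain ⟨m, hm, hcase⟩ := mem_sh3.1 hx
  obtain ⟨hmS, hmt⟩ := mem_filter.1 hm
  have main : ∀ b : Idx, 3 ≤ (b : ℕ) → m + ee b ∈ T := by
    intro b hb
    apply hneg m hmS b hb
    intro a ha y hy heq
    have h1 : phi (y + ee a) = phi y + 1 := phi_add_lo _ _ ha
    have h2 : phi (m + ee b) = phi m := phi_add_hi _ _ hb
    rw [heq, h2, hmt] at h1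
    have h3 := p_le_phi h hy
    omega
  rcases hcase with rfl | rfl | rfl
  · exact main 3 (by decide)
  · exact main 4 (by decide)
  · exact main 5 (by decide)

lemma MsA_sub (h : S.Nonempty) (hpos : HPos S T) : MsA S h ⊆ T := by
  intro x hx
  obtain ⟨a, ha, m, hm, rfl⟩ := mem_MsA.1 hx
  obtain ⟨hmS, hmD, _⟩ := mem_filter.1 hm
  apply hpos m hmS a ha
  intro b hb y hy heq
  have hba : b ≠ a := by
    intro hh
    rw [hh] at hb
    omega
  have h1 := DFunLike.congr_fun heq a
  rw [add_ee_apply, add_ee_apply, if_neg hba, if_pos rfl] at h1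
  have h2 := coord_le_D h hy a
  omega

lemma MsB_sub (h : S.Nonempty) (hneg : HNeg S T) : MsB S h ⊆ T := by
  intro x hx
  obtain ⟨b, hb, m, hm, rfl⟩ := mem_MsB.1 hx
  obtain ⟨hmS, hmD, _⟩ := mem_filter.1 hm
  apply hneg m hmS b hb
  intro a ha y hy heq
  have hab : a ≠ b := by
    intro hh
    rw [hh] at ha
    omega
  have h1 := DFunLike.congr_fun heq b
  rw [add_ee_apply, add_ee_apply, if_neg hab, if_pos rfl] at h1
  have h2 := coord_le_D h hy b
  omega

-- disjointness lemmas
lemma dTopBot (h : S.Nonempty) :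
    Disjoint (sh3 (StS S h) 0 1 2) (sh3 (SpS S h) 3 4 5) := by
  apply disjoint_of_phi
  intro x hx y hy
  rw [Top_phi h x hx, Bot_phi h y hy]
  have := p_le_t h
  omega

lemma dTopMsA (h : S.Nonempty) : Disjoint (sh3 (StS S h) 0 1 2) (MsA S h) := by
  apply disjoint_of_phi
  intro x hx y hy
  rw [Top_phi h x hx]
  have := MsA_phi h y hy
  omega

lemma dTopMsB (h : S.Nonempty) : Disjoint (sh3 (StS S h) 0 1 2) (MsB S h) := by
  apply disjoint_of_phi
  intro x hx y hy
  rw [Top_phi h x hx]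
  have := MsB_phi h y hy
  omega

lemma dMsABot (h : S.Nonempty) : Disjoint (MsA S h) (sh3 (SpS S h) 3 4 5) := by
  apply disjoint_of_phi
  intro x hx y hy
  rw [Bot_phi h y hy]
  have := MsA_phi h x hx
  omega

lemma dBotMsB (h : S.Nonempty) : Disjoint (sh3 (SpS S h) 3 4 5) (MsB S h) := by
  apply disjoint_of_phi
  intro x hx y hy
  rw [Bot_phi h x hx]
  have := MsB_phi h y hy
  omega

lemma dMsAMsB (h : S.Nonempty) : Disjoint (MsA S h) (MsB S h) := by
  rw [disjoint_left]
  intro x hx hx'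
  obtain ⟨a, ha, m, hm, rfl⟩ := mem_MsA.1 hx
  obtain ⟨hmS, hmD, _⟩ := mem_filter.1 hm
  obtain ⟨b, hb, m', hm', heq⟩ := mem_MsB.1 hx'
  have hm'S : m' ∈ S := (mem_filter.1 hm').1
  have hba : b ≠ a := by
    intro hh
    rw [hh] at hb
    omega
  have h1 := DFunLike.congr_fun heq a
  rw [add_ee_apply, add_ee_apply, if_neg hba, if_pos rfl] at h1
  have h2 := coord_le_D h hm'S a
  omega

-- extra survivors in degenerate cases
lemma textra (h : S.Nonempty) (hneg : HNeg S T) (v : Mon) (hvS : v ∈ S)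
    (hvt : phi v = tS S h) (huniq : ∀ m ∈ S, phi m = tS S h → m = v)
    (hMs1 : (MsA S h).card ≤ 1) (b : Idx) (hb : 3 ≤ (b : ℕ)) : v + ee b ∈ T := by
  apply hneg v hvS b hb
  intro a ha y hy heq
  have hphiy : phi y + 1 = tS S h := by
    have h1 : phi (y + ee a) = phi y + 1 := phi_add_lo _ _ ha
    have h2 : phi (v + ee b) = phi v := phi_add_hi _ _ hb
    rw [heq, h2, hvt] at h1
    exact h1.symm
  have hyv : ∀ l : Idx, l ≠ a → l ≠ b → y l = v l := by
    intro l h1 h2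
    have h3 := DFunLike.congr_fun heq l
    rw [add_ee_apply, add_ee_apply, if_neg (fun hh => h1 hh.symm),
      if_neg (fun hh => h2 hh.symm)] at h3
    omega
  have charge : ∀ a' : Idx, (a' : ℕ) < 3 → a' ≠ a →
      ∃ mm ∈ S, mm a' = DS S h a' ∧ phi mm ≠ tS S h := by
    intro a' h3 hne'
    obtain ⟨m₀, hm₀, hDm₀⟩ := exists_D h a'
    by_cases hc : phi m₀ = tS S h
    · have hm0v : m₀ = v := huniq _ hm₀ hc
      refine ⟨y, hy, ?_, ?_⟩
      · have hab : a' ≠ b := by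
          intro hh
          rw [hh] at h3
          omega
        have h4 : y a' = v a' := hyv a' hne' hab
        rw [hm0v] at hDm₀
        rw [h4, hDm₀]
      · omega
    · exact ⟨m₀, hm₀, hDm₀, hc⟩
  obtain ⟨a1, a2, ha1, ha2, ha1a, ha2a, ha12⟩ :
      ∃ a1 a2 : Idx, (a1 : ℕ) < 3 ∧ (a2 : ℕ) < 3 ∧ a1 ≠ a ∧ a2 ≠ a ∧ a1 ≠ a2 := by
    rcases idx_lt3 ha with rfl | rfl | rfl
    · exact ⟨1, 2, by decide, by decide, by decide, by decide, by decide⟩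
    · exact ⟨0, 2, by decide, by decide, by decide, by decide, by decide⟩
    · exact ⟨0, 1, by decide, by decide, by decide, by decide, by decide⟩
  obtain ⟨mm1, hmm1S, hD1, hp1⟩ := charge a1 ha1 ha1a
  obtain ⟨mm2, hmm2S, hD2, hp2⟩ := charge a2 ha2 ha2a
  have hx1 : mm1 + ee a1 ∈ MsA S h :=
    mem_MsA.2 ⟨a1, ha1, mm1, mem_filter.2 ⟨hmm1S, hD1, hp1⟩, rfl⟩
  have hx2 : mm2 + ee a2 ∈ MsA S h :=
    mem_MsA.2 ⟨a2, ha2, mm2, mem_filter.2 ⟨hmm2S, hD2, hp2⟩, rfl⟩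
  have hne12 : mm1 + ee a1 ≠ mm2 + ee a2 := by
    intro hh
    have c1 := DFunLike.congr_fun hh a1
    rw [add_ee_apply, add_ee_apply, if_pos rfl, if_neg (fun hhh => ha12 hhh.symm)] at c1
    have c3 := coord_le_D h hmm2S a1
    omega
  have : 1 < (MsA S h).card := one_lt_card.2 ⟨_, hx1, _, hx2, hne12⟩
  omega

lemma pextra (h : S.Nonempty) (hpos : HPos S T) (w : Mon) (hwS : w ∈ S)
    (hwp : phi w = pS S h) (huniq : ∀ m ∈ S, phi m = pS S h → m = w)
    (hMs1 : (MsB S h).card ≤ 1) (a : Idx) (ha : (a : ℕ) < 3) : w + ee a ∈ T := by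
  apply hpos w hwS a ha
  intro b hb y hy heq
  have hphiy : phi y = pS S h + 1 := by
    have h1 : phi (y + ee b) = phi y := phi_add_hi _ _ hb
    have h2 : phi (w + ee a) = phi w + 1 := phi_add_lo _ _ ha
    rw [heq, h2, hwp] at h1
    exact h1.symm
  have hyw : ∀ l : Idx, l ≠ a → l ≠ b → y l = w l := by
    intro l h1 h2
    have h3 := DFunLike.congr_fun heq l
    rw [add_ee_apply, add_ee_apply, if_neg (fun hh => h2 hh.symm),
      if_neg (fun hh => h1 hh.symm)] at h3
    omega
  have charge : ∀ b' : Idx, 3 ≤ (b' : ℕ) → b' ≠ b →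
      ∃ mm ∈ S, mm b' = DS S h b' ∧ phi mm ≠ pS S h := by
    intro b' h3 hne'
    obtain ⟨m₀, hm₀, hDm₀⟩ := exists_D h b'
    by_cases hc : phi m₀ = pS S h
    · have hm0w : m₀ = w := huniq _ hm₀ hc
      refine ⟨y, hy, ?_, ?_⟩
      · have hba : b' ≠ a := by
          intro hh
          rw [hh] at h3
          omega
        have h4 : y b' = w b' := hyw b' hba hne'
        rw [hm0w] at hDm₀
        rw [h4, hDm₀]
      · omega
    · exact ⟨m₀, hm₀, hDm₀, hc⟩
  obtain ⟨b1, b2, hb1, hb2, hb1b, hb2b, hb12⟩ :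
      ∃ b1 b2 : Idx, 3 ≤ (b1 : ℕ) ∧ 3 ≤ (b2 : ℕ) ∧ b1 ≠ b ∧ b2 ≠ b ∧ b1 ≠ b2 := by
    rcases idx_ge3 hb with rfl | rfl | rfl
    · exact ⟨4, 5, by decide, by decide, by decide, by decide, by decide⟩
    · exact ⟨3, 5, by decide, by decide, by decide, by decide, by decide⟩
    · exact ⟨3, 4, by decide, by decide, by decide, by decide, by decide⟩
  obtain ⟨mm1, hmm1S, hD1, hp1⟩ := charge b1 hb1 hb1b
  obtain ⟨mm2, hmm2S, hD2, hp2⟩ := charge b2 hb2 hb2b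
  have hx1 : mm1 + ee b1 ∈ MsB S h :=
    mem_MsB.2 ⟨b1, hb1, mm1, mem_filter.2 ⟨hmm1S, hD1, hp1⟩, rfl⟩
  have hx2 : mm2 + ee b2 ∈ MsB S h :=
    mem_MsB.2 ⟨b2, hb2, mm2, mem_filter.2 ⟨hmm2S, hD2, hp2⟩, rfl⟩
  have hne12 : mm1 + ee b1 ≠ mm2 + ee b2 := by
    intro hh
    have c1 := DFunLike.congr_fun hh b1
    rw [add_ee_apply, add_ee_apply, if_pos rfl, if_neg (fun hhh => hb12 hhh.symm)] at c1
    have c3 := coord_le_D h hmm2S b1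
    omega
  have : 1 < (MsB S h).card := one_lt_card.2 ⟨_, hx1, _, hx2, hne12⟩
  omega

lemma card_sh3_ge5 (X : Finset Mon) (h2 : 2 ≤ X.card) (i j k : Idx)
    (hij : i ≠ j) (hik : i ≠ k) (hjk : j ≠ k) :
    5 ≤ (sh3 X i j k).card := by
  by_cases hc : X.card = 2
  · obtain ⟨m, m', hmm, rfl⟩ := card_eq_two.1 hc
    exact card_sh3_pair hmm i j k hij hik hjk
  · have hX : X.Nonempty := card_pos.1 (by omega)
    have := card_sh3 X hX i j k hij hik hjk
    omega

end Comb

theorem combinatorial (S T : Finset Mon) (hS2 : 2 ≤ S.card)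
    (hpos : HPos S T) (hneg : HNeg S T) : 9 ≤ T.card := by
  have h : S.Nonempty := card_pos.1 (by omega)
  by_cases hA : (StS S h).card = 1 ∧ (MsA S h).card ≤ 1
  · -- T-route : top level is a dominant singleton
    obtain ⟨hSt1, hMs1⟩ := hA
    obtain ⟨v, hv⟩ := card_eq_one.1 hSt1
    have hvmem : v ∈ StS S h := hv ▸ mem_singleton_self v
    have hvS : v ∈ S := (mem_filter.1 hvmem).1
    have hvt : phi v = tS S h := (mem_filter.1 hvmem).2
    have huniq : ∀ m ∈ S, phi m = tS S h → m = v := by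
      intro m hm hmt
      have hmem : m ∈ StS S h := mem_filter.2 ⟨hm, hmt⟩
      rw [hv] at hmem
      exact mem_singleton.1 hmem
    have hpt : pS S h ≠ tS S h := by
      intro hh
      have hsub : S ⊆ StS S h := by
        intro m hm
        exact mem_filter.2 ⟨hm, le_antisymm (phi_le_t h hm) (hh ▸ p_le_phi h hm)⟩
      have := card_le_card hsub
      omega
    set NB : Finset Mon := {v + ee 3, v + ee 4, v + ee 5} with hNBdef
    have hNBmem : ∀ x ∈ NB, x = v + ee 3 ∨ x = v + ee 4 ∨ x = v + ee 5 := by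
      intro x hx
      simpa [hNBdef, mem_insert, mem_singleton] using hx
    have hNBsub : NB ⊆ T := by
      intro x hx
      rcases hNBmem x hx with rfl | rfl | rfl
      · exact textra h hneg v hvS hvt huniq hMs1 3 (by decide)
      · exact textra h hneg v hvS hvt huniq hMs1 4 (by decide)
      · exact textra h hneg v hvS hvt huniq hMs1 5 (by decide)
    have hNBcard : NB.card = 3 := by
      rw [hNBdef, card_insert_of_notMem, card_insert_of_notMem, card_singleton]
      · simp [add_ee_ne v (show (4 : Idx) ≠ 5 by decide)]
      · simp [add_ee_ne v (show (3 : Idx) ≠ 4 by decide),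
          add_ee_ne v (show (3 : Idx) ≠ 5 by decide)]
    have hTopcard : 3 ≤ (sh3 (StS S h) 0 1 2).card := by
      have := card_sh3 (StS S h) (St_ne h) 0 1 2 (by decide) (by decide) (by decide)
      omega
    have hBotcard : 3 ≤ (sh3 (SpS S h) 3 4 5).card := by
      have h1 := card_sh3 (SpS S h) (Sp_ne h) 3 4 5 (by decide) (by decide) (by decide)
      have h2 := card_pos.2 (Sp_ne h)
      omega
    have phiNB : ∀ x ∈ NB, phi x = tS S h := by
      intro x hx
      rcases hNBmem x hx with rfl | rfl | rfl <;>
        rw [phi_add_hi _ _ (by decide), hvt]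
    have d1 : Disjoint (sh3 (StS S h) 0 1 2) NB := by
      apply disjoint_of_phi
      intro x hx y hy
      rw [Top_phi h x hx, phiNB y hy]
      omega
    have d2 : Disjoint (sh3 (StS S h) 0 1 2) (sh3 (SpS S h) 3 4 5) := dTopBot h
    have d3 : Disjoint NB (sh3 (SpS S h) 3 4 5) := by
      apply disjoint_of_phi
      intro x hx y hy
      rw [phiNB x hx, Bot_phi h y hy]
      omega
    have hsub : (sh3 (StS S h) 0 1 2) ∪ (NB ∪ (sh3 (SpS S h) 3 4 5)) ⊆ T := by
      intro x hx
      rcases mem_union.1 hx with hx | hx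
      · exact Top_sub h hpos hx
      rcases mem_union.1 hx with hx | hx
      · exact hNBsub hx
      · exact Bot_sub h hneg hx
    have hcard := card_le_card hsub
    rw [card_union_of_disjoint (disjoint_union_right.2 ⟨d1, d2⟩),
      card_union_of_disjoint d3] at hcard
    omega
  by_cases hB : (SpS S h).card = 1 ∧ (MsB S h).card ≤ 1
  · -- T'-route : bottom level is a dominant singleton
    obtain ⟨hSp1, hMs1⟩ := hB
    obtain ⟨w, hw⟩ := card_eq_one.1 hSp1
    have hwmem : w ∈ SpS S h := hw ▸ mem_singleton_self w
    have hwS : w ∈ S := (mem_filter.1 hwmem).1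
    have hwp : phi w = pS S h := (mem_filter.1 hwmem).2
    have huniq : ∀ m ∈ S, phi m = pS S h → m = w := by
      intro m hm hmt
      have hmem : m ∈ SpS S h := mem_filter.2 ⟨hm, hmt⟩
      rw [hw] at hmem
      exact mem_singleton.1 hmem
    have hpt : pS S h ≠ tS S h := by
      intro hh
      have hsub : S ⊆ SpS S h := by
        intro m hm
        exact mem_filter.2 ⟨hm, le_antisymm (hh ▸ phi_le_t h hm) (p_le_phi h hm)⟩
      have := card_le_card hsub
      omega
    set NA : Finset Mon := {w + ee 0, w + ee 1, w + ee 2} with hNAdef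
    have hNAmem : ∀ x ∈ NA, x = w + ee 0 ∨ x = w + ee 1 ∨ x = w + ee 2 := by
      intro x hx
      simpa [hNAdef, mem_insert, mem_singleton] using hx
    have hNAsub : NA ⊆ T := by
      intro x hx
      rcases hNAmem x hx with rfl | rfl | rfl
      · exact pextra h hpos w hwS hwp huniq hMs1 0 (by decide)
      · exact pextra h hpos w hwS hwp huniq hMs1 1 (by decide)
      · exact pextra h hpos w hwS hwp huniq hMs1 2 (by decide)
    have hNAcard : NA.card = 3 := by
      rw [hNAdef, card_insert_of_notMem, card_insert_of_notMem, card_singleton]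
      · simp [add_ee_ne w (show (1 : Idx) ≠ 2 by decide)]
      · simp [add_ee_ne w (show (0 : Idx) ≠ 1 by decide),
          add_ee_ne w (show (0 : Idx) ≠ 2 by decide)]
    have hTopcard : 3 ≤ (sh3 (StS S h) 0 1 2).card := by
      have h1 := card_sh3 (StS S h) (St_ne h) 0 1 2 (by decide) (by decide) (by decide)
      have h2 := card_pos.2 (St_ne h)
      omega
    have hBotcard : 3 ≤ (sh3 (SpS S h) 3 4 5).card := by
      have h1 := card_sh3 (SpS S h) (Sp_ne h) 3 4 5 (by decide) (by decide) (by decide)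
      omega
    have phiNA : ∀ x ∈ NA, phi x = pS S h + 1 := by
      intro x hx
      rcases hNAmem x hx with rfl | rfl | rfl <;>
        rw [phi_add_lo _ _ (by decide), hwp]
    have d1 : Disjoint (sh3 (StS S h) 0 1 2) NA := by
      apply disjoint_of_phi
      intro x hx y hy
      rw [Top_phi h x hx, phiNA y hy]
      omega
    have d2 : Disjoint (sh3 (StS S h) 0 1 2) (sh3 (SpS S h) 3 4 5) := dTopBot h
    have d3 : Disjoint NA (sh3 (SpS S h) 3 4 5) := by
      apply disjoint_of_phi
      intro x hx y hy
      rw [phiNA x hx, Bot_phi h y hy]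
      omega
    have hsub : (sh3 (StS S h) 0 1 2) ∪ (NA ∪ (sh3 (SpS S h) 3 4 5)) ⊆ T := by
      intro x hx
      rcases mem_union.1 hx with hx | hx
      · exact Top_sub h hpos hx
      rcases mem_union.1 hx with hx | hx
      · exact hNAsub hx
      · exact Bot_sub h hneg hx
    have hcard := card_le_card hsub
    rw [card_union_of_disjoint (disjoint_union_right.2 ⟨d1, d2⟩),
      card_union_of_disjoint d3] at hcard
    omega
  · -- main route
    push_neg at hA hB
    have top5 : 5 ≤ ((sh3 (StS S h) 0 1 2) ∪ MsA S h).card := by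
      by_cases h2 : 2 ≤ (StS S h).card
      · have h5 := card_sh3_ge5 (StS S h) h2 0 1 2 (by decide) (by decide) (by decide)
        exact le_trans h5 (card_le_card subset_union_left)
      · have h1le : (StS S h).card = 1 := by
          have := card_pos.2 (St_ne h)
          omega
        have hMs2 : 1 < (MsA S h).card := by
          have := hA h1le
          omega
        have htop3 : 3 ≤ (sh3 (StS S h) 0 1 2).card := by
          have := card_sh3 (StS S h) (St_ne h) 0 1 2 (by decide) (by decide) (by decide)
          omega
        rw [card_union_of_disjoint (dTopMsA h)]
        omega
    have bot4 : 4 ≤ ((sh3 (SpS S h) 3 4 5) ∪ MsB S h).card := by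
      by_cases h2 : 2 ≤ (SpS S h).card
      · have h4 := card_sh3 (SpS S h) (Sp_ne h) 3 4 5 (by decide) (by decide) (by decide)
        exact le_trans (by omega) (card_le_card subset_union_left)
      · have h1le : (SpS S h).card = 1 := by
          have := card_pos.2 (Sp_ne h)
          omega
        have hMs2 : 1 < (MsB S h).card := by
          have := hB h1le
          omega
        have hbot3 : 3 ≤ (sh3 (SpS S h) 3 4 5).card := by
          have := card_sh3 (SpS S h) (Sp_ne h) 3 4 5 (by decide) (by decide) (by decide)
          omega
        rw [card_union_of_disjoint (dBotMsB h)]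
        omega
    have dd : Disjoint ((sh3 (StS S h) 0 1 2) ∪ MsA S h)
        ((sh3 (SpS S h) 3 4 5) ∪ MsB S h) := by
      refine disjoint_union_left.2 ⟨disjoint_union_right.2 ⟨dTopBot h, dTopMsB h⟩,
        disjoint_union_right.2 ⟨dMsABot h, dMsAMsB h⟩⟩
    have hsub : ((sh3 (StS S h) 0 1 2) ∪ MsA S h) ∪ ((sh3 (SpS S h) 3 4 5) ∪ MsB S h) ⊆ T := by
      intro x hx
      rcases mem_union.1 hx with hx | hx
      · rcases mem_union.1 hx with hx | hx
        · exact Top_sub h hpos hx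
        · exact MsA_sub h hpos hx
      · rcases mem_union.1 hx with hx | hx
        · exact Bot_sub h hneg hx
        · exact MsB_sub h hneg hx
    have hcard := card_le_card hsub
    rw [card_union_of_disjoint dd] at hcard
    omega

end
end Statement3Aux

open MvPolynomial

/-- For a homogeneous polynomial `Q` in `x₁, …, x₆` with nonnegative
coefficients and at least two monomials, `P = (x₁ + x₂ + x₃ − x₄ − x₅ − x₆) * Q` has at
least `9` monomials. -/
theorem statement3 (Q : MvPolynomial (Fin 6) ℝ)
    (n : ℕ) (hhom : Q.IsHomogeneous n)
    (hnonneg : ∀ d, 0 ≤ Q.coeff d)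
    (hcard : 2 ≤ Q.support.card) :
    9 ≤ (((X 0 + X 1 + X 2 - X 3 - X 4 - X 5 : MvPolynomial (Fin 6) ℝ) * Q).support).card := by
  classical
  apply Statement3Aux.combinatorial Q.support
    ((X 0 + X 1 + X 2 - X 3 - X 4 - X 5 : MvPolynomial (Fin 6) ℝ) * Q).support hcard
  · intro m hm a ha hcond
    exact Statement3Aux.posSurv Q hnonneg m hm a ha hcond
  · intro m hm b hb hcond
    exact Statement3Aux.negSurv Q hnonneg m hm b hb hcond
end

section
/- Let k ≥ 1 be an integer, let b₁, …, b_k be nonzero real numbers and a₁, …, a_k be real numbers with at least two of the a_i nonzero, and set P = (b₁x₁ + ⋯ + b_kx_k) · (a₁x₁ + ⋯ + a_kx_k). Then n(P) ≥ 2k − 2. -/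
open MvPolynomial

noncomputable def mu {k : ℕ} (i j : Fin k) : Fin k →₀ ℕ :=
  Finsupp.single i 1 + Finsupp.single j 1

lemma mu_eq_iff {k : ℕ} (i j x y : Fin k) :
    mu i j = mu x y ↔ (i = x ∧ j = y) ∨ (i = y ∧ j = x) := by
  constructor
  · intro h
    have hx := DFunLike.congr_fun h x
    have hy := DFunLike.congr_fun h y
    have hi := DFunLike.congr_fun h i
    have hj := DFunLike.congr_fun h j
    simp only [mu, Finsupp.add_apply, Finsupp.single_apply] at hx hy hi hj
    by_cases h1 : i = x <;> by_cases h2 : i = y <;> by_cases h3 : j = x <;>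
      by_cases h4 : j = y <;>
      first
        | tauto
        | (split_ifs at hx hy hi hj <;> omega)
  · rintro (⟨rfl, rfl⟩ | ⟨rfl, rfl⟩)
    · rfl
    · simp [mu, add_comm]

lemma prod_eq {k : ℕ} (b a : Fin k → ℝ) :
    ((∑ i : Fin k, C (b i) * X i) * (∑ i : Fin k, C (a i) * X i)
      : MvPolynomial (Fin k) ℝ) =
    ∑ i : Fin k, ∑ j : Fin k, monomial (mu i j) (b i * a j) := by
  rw [Finset.sum_mul_sum]
  refine Finset.sum_congr rfl fun i _ => Finset.sum_congr rfl fun j _ => ?_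
  have h1 : (C (b i) * X i : MvPolynomial (Fin k) ℝ) = monomial (Finsupp.single i 1) (b i) := by
    rw [X, C_mul_monomial, mul_one]
  have h2 : (C (a j) * X j : MvPolynomial (Fin k) ℝ) = monomial (Finsupp.single j 1) (a j) := by
    rw [X, C_mul_monomial, mul_one]
  rw [h1, h2, monomial_mul]
  rfl

lemma coeff_diag {k : ℕ} (b a : Fin k → ℝ) (x : Fin k) :
    coeff (mu x x) ((∑ i : Fin k, C (b i) * X i) * (∑ i : Fin k, C (a i) * X i)
      : MvPolynomial (Fin k) ℝ) = b x * a x := by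
  rw [prod_eq]
  have hc : ∀ i j : Fin k, (mu i j = mu x x) ↔ (i = x ∧ j = x) := by
    intro i j; rw [mu_eq_iff]; tauto
  simp only [coeff_sum, coeff_monomial, hc]
  simp [ite_and, Finset.sum_ite_eq']

lemma coeff_offdiag {k : ℕ} (b a : Fin k → ℝ) (x y : Fin k) (hxy : x ≠ y) :
    coeff (mu x y) ((∑ i : Fin k, C (b i) * X i) * (∑ i : Fin k, C (a i) * X i)
      : MvPolynomial (Fin k) ℝ) = b x * a y + b y * a x := by
  rw [prod_eq]
  simp only [coeff_sum, coeff_monomial, mu_eq_iff]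
  have hsplit : ∀ i j : Fin k,
      (if (i = x ∧ j = y) ∨ (i = y ∧ j = x) then b i * a j else 0) =
      (if i = x ∧ j = y then b i * a j else 0) +
      (if i = y ∧ j = x then b i * a j else 0) := by
    intro i j
    by_cases hP : i = x ∧ j = y
    · obtain ⟨rfl, rfl⟩ := hP
      simp [hxy, Ne.symm hxy]
    · by_cases hQ : i = y ∧ j = x
      · obtain ⟨rfl, rfl⟩ := hQ
        simp [hxy, Ne.symm hxy, hP]
      · simp [hP, hQ]
  simp only [hsplit, Finset.sum_add_distrib]
  simp [ite_and, Finset.sum_ite_eq']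

lemma mem_support_diag {k : ℕ} (b a : Fin k → ℝ) (hb : ∀ i, b i ≠ 0) (x : Fin k)
    (hax : a x ≠ 0) :
    mu x x ∈ (((∑ i : Fin k, C (b i) * X i) * (∑ i : Fin k, C (a i) * X i)
      : MvPolynomial (Fin k) ℝ)).support := by
  rw [mem_support_iff, coeff_diag]
  exact mul_ne_zero (hb x) hax

lemma mem_support_offdiag {k : ℕ} (b a : Fin k → ℝ) (hb : ∀ i, b i ≠ 0) (x y : Fin k)
    (hxy : x ≠ y) (h : a x / b x + a y / b y ≠ 0) :
    mu x y ∈ (((∑ i : Fin k, C (b i) * X i) * (∑ i : Fin k, C (a i) * X i)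
      : MvPolynomial (Fin k) ℝ)).support := by
  rw [mem_support_iff, coeff_offdiag b a x y hxy]
  have key : b x * a y + b y * a x = b x * b y * (a x / b x + a y / b y) := by
    have h1 := hb x
    have h2 := hb y
    field_simp
    ring
  rw [key]
  exact mul_ne_zero (mul_ne_zero (hb x) (hb y)) h

lemma good_pivots {k : ℕ} (b a : Fin k → ℝ) (hb : ∀ i, b i ≠ 0)
    (ha : ∃ i j : Fin k, i ≠ j ∧ a i ≠ 0 ∧ a j ≠ 0) :
    ∃ p q : Fin k, p ≠ q ∧ a p ≠ 0 ∧ a q ≠ 0 ∧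
      ∀ m, m ≠ p → m ≠ q →
        ¬(a m / b m + a p / b p = 0 ∧ a m / b m + a q / b q = 0) := by
  obtain ⟨p, q, hpq, hap, haq⟩ := ha
  by_cases hgood : ∀ m, m ≠ p → m ≠ q →
      ¬(a m / b m + a p / b p = 0 ∧ a m / b m + a q / b q = 0)
  · exact ⟨p, q, hpq, hap, haq, hgood⟩
  · push_neg at hgood
    obtain ⟨m, hmp, hmq, h1, h2⟩ := hgood
    have hrp : a p / b p ≠ 0 := div_ne_zero hap (hb p)
    have hrm : a m / b m = -(a p / b p) := by linarith
    have ham : a m ≠ 0 := by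
      intro h0
      rw [h0, zero_div] at hrm
      exact hrp (by linarith)
    refine ⟨p, m, fun h => hmp h.symm, hap, ham, ?_⟩
    intro m' hm'p hm'm ⟨e1, e2⟩
    rw [hrm] at e2
    exact hrp (by linarith)

noncomputable def g {k : ℕ} (b a : Fin k → ℝ) (t m : Fin k) : Fin k →₀ ℕ :=
  if a m / b m + a t / b t = 0 then mu m m else mu m t

lemma g_shape {k : ℕ} (b a : Fin k → ℝ) (t m : Fin k) :
    (g b a t m = mu m m ∧ a m / b m + a t / b t = 0) ∨
    (g b a t m = mu m t ∧ a m / b m + a t / b t ≠ 0) := by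
  by_cases h : a m / b m + a t / b t = 0 <;> simp [g, h]

lemma g_mem {k : ℕ} (b a : Fin k → ℝ) (hb : ∀ i, b i ≠ 0) (t m : Fin k)
    (hmt : m ≠ t) (ht : a t / b t ≠ 0) :
    g b a t m ∈ (((∑ i : Fin k, C (b i) * X i) * (∑ i : Fin k, C (a i) * X i)
      : MvPolynomial (Fin k) ℝ)).support := by
  rcases g_shape b a t m with ⟨he, hc⟩ | ⟨he, hc⟩
  · rw [he]
    refine mem_support_diag b a hb m ?_
    intro h0
    rw [h0, zero_div] at hc
    exact ht (by linarith)
  · rw [he]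
    exact mem_support_offdiag b a hb m t hmt hc

lemma g_ne_fixed {k : ℕ} (b a : Fin k → ℝ) (t m x : Fin k) (hmx : m ≠ x) :
    g b a t m ≠ mu x x := by
  rcases g_shape b a t m with ⟨he, _⟩ | ⟨he, _⟩ <;> rw [he, Ne, mu_eq_iff] <;> tauto

lemma g_inj_same {k : ℕ} (b a : Fin k → ℝ) (p q m : Fin k) (hpq : p ≠ q)
    (hmp : m ≠ p) (hmq : m ≠ q)
    (hgood : ¬(a m / b m + a p / b p = 0 ∧ a m / b m + a q / b q = 0)) :
    g b a p m ≠ g b a q m := by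
  rcases g_shape b a p m with ⟨he1, hc1⟩ | ⟨he1, hc1⟩ <;>
    rcases g_shape b a q m with ⟨he2, hc2⟩ | ⟨he2, hc2⟩ <;>
    rw [he1, he2]
  · exact (hgood ⟨hc1, hc2⟩).elim
  · rw [Ne, mu_eq_iff]; tauto
  · rw [Ne, mu_eq_iff]; tauto
  · rw [Ne, mu_eq_iff]; tauto

lemma g_ne_g {k : ℕ} (b a : Fin k → ℝ) (t t' m m' : Fin k)
    (hmm' : m ≠ m') (hmt' : m ≠ t') :
    g b a t m ≠ g b a t' m' := by
  rcases g_shape b a t m with ⟨he1, _⟩ | ⟨he1, _⟩ <;>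
    rcases g_shape b a t' m' with ⟨he2, _⟩ | ⟨he2, _⟩ <;>
    rw [he1, he2, Ne, mu_eq_iff] <;> tauto

noncomputable def Fm {k : ℕ} (b a : Fin k → ℝ) (p q : Fin k) (z : Fin k × Bool) :
    Fin k →₀ ℕ :=
  if z.1 = p then (if z.2 then mu q q else mu p p)
  else g b a (if z.2 then q else p) z.1

lemma Fm_p_false {k : ℕ} (b a : Fin k → ℝ) (p q : Fin k) :
    Fm b a p q (p, false) = mu p p := by simp [Fm]

lemma Fm_p_true {k : ℕ} (b a : Fin k → ℝ) (p q : Fin k) :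
    Fm b a p q (p, true) = mu q q := by simp [Fm]

lemma Fm_ne_false {k : ℕ} (b a : Fin k → ℝ) (p q m : Fin k) (hmp : m ≠ p) :
    Fm b a p q (m, false) = g b a p m := by simp [Fm, hmp]

lemma Fm_ne_true {k : ℕ} (b a : Fin k → ℝ) (p q m : Fin k) (hmp : m ≠ p) :
    Fm b a p q (m, true) = g b a q m := by simp [Fm, hmp]

/-- If all `bᵢ ≠ 0` and at least two of the `aᵢ` are nonzero, then
`P = (b₁x₁ + ⋯ + b_kx_k) * (a₁x₁ + ⋯ + a_kx_k)` has at least `2k − 2` monomials. -/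
theorem statement5 (k : ℕ) (hk : 1 ≤ k)
    (b : Fin k → ℝ) (hb : ∀ i, b i ≠ 0) (a : Fin k → ℝ)
    (ha : ∃ i j : Fin k, i ≠ j ∧ a i ≠ 0 ∧ a j ≠ 0) :
    2 * k - 2 ≤
      (((∑ i : Fin k, C (b i) * X i) * (∑ i : Fin k, C (a i) * X i)
        : MvPolynomial (Fin k) ℝ).support).card := by
  classical
  obtain ⟨p, q, hpq, hap, haq, hgood⟩ := good_pivots b a hb ha
  have hrp : a p / b p ≠ 0 := div_ne_zero hap (hb p)
  have hrq : a q / b q ≠ 0 := div_ne_zero haq (hb q)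
  set D : Finset (Fin k × Bool) :=
    (Finset.univ.erase q) ×ˢ (Finset.univ : Finset Bool) with hD
  have hmemD : ∀ z : Fin k × Bool, z ∈ D → z.1 ≠ q := by
    intro z hz
    rw [hD, Finset.mem_product, Finset.mem_erase] at hz
    exact hz.1.1
  have hmem : ∀ z ∈ D, Fm b a p q z ∈
      (((∑ i : Fin k, C (b i) * X i) * (∑ i : Fin k, C (a i) * X i)
        : MvPolynomial (Fin k) ℝ)).support := by
    rintro ⟨m, c⟩ hz
    have hmq : m ≠ q := hmemD _ hz
    by_cases hmp : m = p
    · cases c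
      · rw [hmp, Fm_p_false]; exact mem_support_diag b a hb p hap
      · rw [hmp, Fm_p_true]; exact mem_support_diag b a hb q haq
    · cases c
      · rw [Fm_ne_false b a p q m hmp]; exact g_mem b a hb p m hmp hrp
      · rw [Fm_ne_true b a p q m hmp]; exact g_mem b a hb q m hmq hrq
  have hinj : Set.InjOn (Fm b a p q) D := by
    rintro ⟨m, c⟩ hz ⟨m', c'⟩ hz' h
    have hmq : m ≠ q := hmemD _ (by simpa using hz)
    have hm'q : m' ≠ q := hmemD _ (by simpa using hz')
    by_cases hmp : m = p <;> by_cases hm'p : m' = p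
    · -- both p
      cases c <;> cases c'
      · exact Prod.ext (hmp.trans hm'p.symm) rfl
      · exfalso
        rw [hmp, Fm_p_false, hm'p, Fm_p_true, mu_eq_iff] at h
        tauto
      · exfalso
        rw [hmp, Fm_p_true, hm'p, Fm_p_false, mu_eq_iff] at h
        tauto
      · exact Prod.ext (hmp.trans hm'p.symm) rfl
    · exfalso
      cases c <;> cases c'
      · rw [hmp, Fm_p_false, Fm_ne_false b a p q m' hm'p] at h
        exact g_ne_fixed b a p m' p hm'p h.symm
      · rw [hmp, Fm_p_false, Fm_ne_true b a p q m' hm'p] at h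
        exact g_ne_fixed b a q m' p hm'p h.symm
      · rw [hmp, Fm_p_true, Fm_ne_false b a p q m' hm'p] at h
        exact g_ne_fixed b a p m' q hm'q h.symm
      · rw [hmp, Fm_p_true, Fm_ne_true b a p q m' hm'p] at h
        exact g_ne_fixed b a q m' q hm'q h.symm
    · exfalso
      cases c <;> cases c'
      · rw [hm'p, Fm_p_false, Fm_ne_false b a p q m hmp] at h
        exact g_ne_fixed b a p m p hmp h
      · rw [hm'p, Fm_p_true, Fm_ne_false b a p q m hmp] at h
        exact g_ne_fixed b a p m q hmq h
      · rw [hm'p, Fm_p_false, Fm_ne_true b a p q m hmp] at h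
        exact g_ne_fixed b a q m p hmp h
      · rw [hm'p, Fm_p_true, Fm_ne_true b a p q m hmp] at h
        exact g_ne_fixed b a q m q hmq h
    · by_cases hmm' : m = m'
      · subst hmm'
        cases c <;> cases c'
        · rfl
        · exfalso
          rw [Fm_ne_false b a p q m hmp, Fm_ne_true b a p q m hmp] at h
          exact g_inj_same b a p q m hpq hmp hmq (hgood m hmp hmq) h
        · exfalso
          rw [Fm_ne_true b a p q m hmp, Fm_ne_false b a p q m hmp] at h
          exact g_inj_same b a p q m hpq hmp hmq (hgood m hmp hmq) h.symm
        · rfl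
      · exfalso
        cases c <;> cases c'
        · rw [Fm_ne_false b a p q m hmp, Fm_ne_false b a p q m' hm'p] at h
          exact g_ne_g b a p p m m' hmm' hmp h
        · rw [Fm_ne_false b a p q m hmp, Fm_ne_true b a p q m' hm'p] at h
          exact g_ne_g b a p q m m' hmm' hmq h
        · rw [Fm_ne_true b a p q m hmp, Fm_ne_false b a p q m' hm'p] at h
          exact g_ne_g b a q p m m' hmm' hmp h
        · rw [Fm_ne_true b a p q m hmp, Fm_ne_true b a p q m' hm'p] at h
          exact g_ne_g b a q q m m' hmm' hmq h
  have hcard : D.card = (k - 1) * 2 := by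
    rw [hD, Finset.card_product]
    simp [Finset.card_erase_of_mem]
  calc 2 * k - 2 = (k - 1) * 2 := by omega
    _ = D.card := hcard.symm
    _ ≤ _ := Finset.card_le_card_of_injOn (Fm b a p q) hmem hinj
end

section
/- Let a₁, a₂, a₃, a₄ be real numbers, set Q = a₁x₁ + a₂x₂ + a₃x₃ + a₄x₄ and P = (x₁ + x₂ − x₃ − x₄) · Q. Suppose that n(P) ≤ 6 and that Q(x) > 0 whenever x₁ + x₂ > x₃ + x₄ and x_i > 0 for all i = 1, 2, 3, 4. Then Q is a positive scalar multiple of one of the following nine linear forms: x₁, x₂, x₃, x₄, x₁ + x₃, x₁ + x₄, x₂ + x₃, x₂ + x₄, x₁ + x₂ + x₃ + x₄. -/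
/-!
With `l = (1, 1, -1, -1)`, the coefficient of `xᵢxⱼ` in `P = (l ⬝ x) * (a ⬝ x)` is
`lᵢaⱼ + lⱼaᵢ` for `i ≠ j` and `lᵢaᵢ` for `i = j`, so `n(P) ≤ 6` says that at least four of these
ten linear forms in `a` vanish. Since `Q` is positive on the open cone `x > 0, x₂ + x₃ < x₀ + x₁`,
it is nonnegative at the boundary points `e₀, e₁` and `eᵢ + eⱼ` (`i ∈ {0, 1}`, `j ∈ {2, 3}`), i.e.
`a₀, a₁ ≥ 0` and `aᵢ + aⱼ ≥ 0`. Splitting on which of `a₀, a₁` vanish, every configuration other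
than the nine listed ones leaves seven monomials of `P` with nonzero coefficient.
-/

open MvPolynomial Finset

section
variable {R σ : Type*} [CommSemiring R]

def quadCoeff [DecidableEq σ] (l a : σ → R) (i j : σ) : R :=
  if i = j then l i * a i else l i * a j + l j * a i

def numQuadTerms [LinearOrder σ] [Fintype σ] [DecidableEq R] (l a : σ → R) : ℕ :=
  #{p : σ × σ | p.1 ≤ p.2 ∧ quadCoeff l a p.1 p.2 ≠ 0}

theorem single_one_add_single_one_eq_iff {i j k m : σ} :
    Finsupp.single k 1 + Finsupp.single m 1 = Finsupp.single i 1 + Finsupp.single j 1 ↔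
      k = i ∧ m = j ∨ k = j ∧ m = i := by
  rw [Finsupp.single_add_single_eq_single_add_single one_ne_zero one_ne_zero]
  simp

theorem coeff_linear_mul_linear [DecidableEq σ] [Fintype σ] (l a : σ → R) (i j : σ) :
    coeff (Finsupp.single i 1 + Finsupp.single j 1)
      ((∑ k, C (l k) * X k) * ∑ k, C (a k) * X k) = quadCoeff l a i j := by
  have hterm (k m : σ) : C (l k) * X k * (C (a m) * X m) =
      monomial (Finsupp.single k 1 + Finsupp.single m 1) (l k * a m) := by
    rw [X, X, C_mul_monomial, C_mul_monomial, monomial_mul, mul_one, mul_one]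
  simp only [sum_mul_sum, hterm, coeff_sum, coeff_monomial, single_one_add_single_one_eq_iff,
    ← Fintype.sum_prod_type']
  unfold quadCoeff
  split_ifs with hij
  · subst hij
    rw [Fintype.sum_eq_single (i, i)]
    · simp
    · rintro ⟨k, m⟩ h
      grind
  · rw [Fintype.sum_eq_add (i, j) (j, i) (by simp [hij])]
    · simp [hij, Ne.symm hij]
    · rintro ⟨k, m⟩ h
      grind

theorem numQuadTerms_le_card_support [LinearOrder σ] [Fintype σ] [DecidableEq R] (l a : σ → R) :
    numQuadTerms l a ≤ #((∑ k, C (l k) * X k) * ∑ k, C (a k) * X k).support := by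
  refine card_le_card_of_injOn (fun p => Finsupp.single p.1 1 + Finsupp.single p.2 1) ?_ ?_
  · intro p hp
    simpa [coeff_linear_mul_linear] using (mem_filter.1 (mem_coe.1 hp)).2.2
  · rintro ⟨i, j⟩ hij ⟨k, m⟩ hkm h
    have hij := (mem_filter.1 (mem_coe.1 hij)).2.1
    have hkm := (mem_filter.1 (mem_coe.1 hkm)).2.1
    rcases single_one_add_single_one_eq_iff.1 h with ⟨rfl, rfl⟩ | ⟨rfl, rfl⟩
    · rfl
    · exact Prod.ext (le_antisymm hij hkm) (le_antisymm hkm hij)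

theorem exists_quadCoeff_eq_zero_of_numQuadTerms_lt [LinearOrder σ] [Fintype σ] [DecidableEq R]
    {l a : σ → R} {s : Finset (σ × σ)} (hs : ∀ p ∈ s, p.1 ≤ p.2) (h : numQuadTerms l a < #s) :
    ∃ p ∈ s, quadCoeff l a p.1 p.2 = 0 := by
  by_contra! hne
  exact h.not_ge (card_le_card fun p hp => by simpa using ⟨hs p hp, hne p hp⟩)

end

theorem nonneg_of_forall_pos_add_mul {b s : ℝ} (h : ∀ ε > 0, 0 < b + ε * s) : 0 ≤ b := by
  by_contra! hb
  rcases le_or_gt s 0 with hs | hs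
  · linarith [h 1 one_pos]
  · have := h (-b / s) (div_pos (neg_pos.2 hb) hs)
    rw [div_mul_cancel₀ _ hs.ne'] at this
    linarith

theorem dotProduct_nonneg_of_pos_on_cone {a : Fin 4 → ℝ}
    (hpos : ∀ x : Fin 4 → ℝ, (∀ i, 0 < x i) → x 2 + x 3 < x 0 + x 1 → 0 < a ⬝ᵥ x)
    {v : Fin 4 → ℝ} (hv : ∀ i, 0 ≤ v i) (hv' : v 2 + v 3 ≤ v 0 + v 1) : 0 ≤ a ⬝ᵥ v := by
  refine nonneg_of_forall_pos_add_mul (s := a ⬝ᵥ ![2, 1, 1, 1]) fun ε hε => ?_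
  rw [← smul_eq_mul, ← dotProduct_smul, ← dotProduct_add]
  refine hpos _ (fun i => add_pos_of_nonneg_of_pos (hv i) (smul_pos hε ?_)) ?_
  · fin_cases i <;> norm_num
  · show v 2 + ε * 1 + (v 3 + ε * 1) < v 0 + ε * 2 + (v 1 + ε * 1)
    linarith

/-- `n(P)` for `P = (x₀ + x₁ - x₂ - x₃) * (a₀x₀ + a₁x₁ + a₂x₂ + a₃x₃)`. -/
noncomputable def numTerms (a₀ a₁ a₂ a₃ : ℝ) : ℕ :=
  numQuadTerms ![1, 1, -1, -1] ![a₀, a₁, a₂, a₃]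

section
variable {a₀ a₁ a₂ a₃ : ℝ}

theorem exists_quadCoeff_eq_zero (ha : numTerms a₀ a₁ a₂ a₃ ≤ 6) (s : Finset (Fin 4 × Fin 4))
    (hs : ∀ p ∈ s, p.1 ≤ p.2) (h7 : 7 ≤ #s) :
    ∃ p ∈ s, quadCoeff ![1, 1, -1, -1] ![a₀, a₁, a₂, a₃] p.1 p.2 = 0 :=
  exists_quadCoeff_eq_zero_of_numQuadTerms_lt hs (ha.trans_lt h7)

theorem numTerms_le_six_pos_pos (ha : numTerms a₀ a₁ a₂ a₃ ≤ 6) (h0 : 0 < a₀) (h1 : 0 < a₁) :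
    a₁ = a₀ ∧ a₂ = a₀ ∧ a₃ = a₀ := by
  have zero := exists_quadCoeff_eq_zero ha
  have h01 : a₁ + a₀ ≠ 0 := (add_pos h1 h0).ne'
  have h2 : a₂ ≠ 0 := by
    rintro rfl
    rcases eq_or_ne a₃ 0 with rfl | h3
    · simpa [quadCoeff, h0.ne', h1.ne', h01] using
        zero {(0, 0), (1, 1), (0, 1), (0, 2), (0, 3), (1, 2), (1, 3)} (by decide) (by decide)
    · simpa [quadCoeff, h0.ne', h1.ne', h01, h3] using
        zero {(0, 0), (1, 1), (3, 3), (0, 1), (0, 2), (1, 2), (2, 3)} (by decide) (by decide)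
  have h3 : a₃ ≠ 0 := by
    rintro rfl
    simpa [quadCoeff, h0.ne', h1.ne', h01, h2] using
      zero {(0, 0), (1, 1), (2, 2), (0, 1), (0, 3), (1, 3), (2, 3)} (by decide) (by decide)
  -- The coefficients of `x₀², x₁², x₂², x₃², x₀x₁` are now nonzero, so at most one of the
  -- four cross coefficients `aⱼ - aᵢ` (`i ∈ {0, 1}`, `j ∈ {2, 3}`) is nonzero.
  have h02_03 : a₂ = a₀ ∨ a₃ = a₀ := by
    simpa [quadCoeff, add_neg_eq_zero, h0.ne', h1.ne', h01, h2, h3] using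
      zero {(0, 0), (1, 1), (2, 2), (3, 3), (0, 1), (0, 2), (0, 3)} (by decide) (by decide)
  have h02_12 : a₂ = a₀ ∨ a₂ = a₁ := by
    simpa [quadCoeff, add_neg_eq_zero, h0.ne', h1.ne', h01, h2, h3] using
      zero {(0, 0), (1, 1), (2, 2), (3, 3), (0, 1), (0, 2), (1, 2)} (by decide) (by decide)
  have h02_13 : a₂ = a₀ ∨ a₃ = a₁ := by
    simpa [quadCoeff, add_neg_eq_zero, h0.ne', h1.ne', h01, h2, h3] using
      zero {(0, 0), (1, 1), (2, 2), (3, 3), (0, 1), (0, 2), (1, 3)} (by decide) (by decide)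
  have h03_12 : a₃ = a₀ ∨ a₂ = a₁ := by
    simpa [quadCoeff, add_neg_eq_zero, h0.ne', h1.ne', h01, h2, h3] using
      zero {(0, 0), (1, 1), (2, 2), (3, 3), (0, 1), (0, 3), (1, 2)} (by decide) (by decide)
  have h03_13 : a₃ = a₀ ∨ a₃ = a₁ := by
    simpa [quadCoeff, add_neg_eq_zero, h0.ne', h1.ne', h01, h2, h3] using
      zero {(0, 0), (1, 1), (2, 2), (3, 3), (0, 1), (0, 3), (1, 3)} (by decide) (by decide)
  have h12_13 : a₂ = a₁ ∨ a₃ = a₁ := by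
    simpa [quadCoeff, add_neg_eq_zero, h0.ne', h1.ne', h01, h2, h3] using
      zero {(0, 0), (1, 1), (2, 2), (3, 3), (0, 1), (1, 2), (1, 3)} (by decide) (by decide)
  grind

theorem numTerms_le_six_zero_pos (ha : numTerms 0 a₁ a₂ a₃ ≤ 6) (h1 : 0 < a₁) (h2 : 0 ≤ a₂)
    (h3 : 0 ≤ a₃) : a₂ = 0 ∧ a₃ = 0 ∨ a₂ = a₁ ∧ a₃ = 0 ∨ a₂ = 0 ∧ a₃ = a₁ := by
  have zero := exists_quadCoeff_eq_zero ha
  rcases h2.eq_or_lt with rfl | h2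
  · have : a₃ = 0 ∨ a₃ = a₁ := by
      simpa [quadCoeff, add_neg_eq_zero, h1.ne'] using
        zero {(1, 1), (0, 1), (1, 2), (3, 3), (2, 3), (0, 3), (1, 3)} (by decide) (by decide)
    tauto
  rcases h3.eq_or_lt with rfl | h3
  · have : a₂ = a₁ := by
      simpa [quadCoeff, add_neg_eq_zero, h1.ne', h2.ne'] using
        zero {(1, 1), (0, 1), (1, 3), (2, 2), (2, 3), (0, 2), (1, 2)} (by decide) (by decide)
    tauto
  simpa [quadCoeff, neg_add_eq_zero, eq_neg_iff_add_eq_zero, h1.ne', h2.ne', h3.ne',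
    (add_pos h3 h2).ne'] using
    zero {(1, 1), (0, 1), (2, 2), (3, 3), (2, 3), (0, 2), (0, 3)} (by decide) (by decide)

theorem numTerms_le_six_pos_zero (ha : numTerms a₀ 0 a₂ a₃ ≤ 6) (h0 : 0 < a₀) (h2 : 0 ≤ a₂)
    (h3 : 0 ≤ a₃) : a₂ = 0 ∧ a₃ = 0 ∨ a₂ = a₀ ∧ a₃ = 0 ∨ a₂ = 0 ∧ a₃ = a₀ := by
  have zero := exists_quadCoeff_eq_zero ha
  rcases h2.eq_or_lt with rfl | h2
  · have : a₃ = 0 ∨ a₃ = a₀ := by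
      simpa [quadCoeff, add_neg_eq_zero, h0.ne'] using
        zero {(0, 0), (0, 1), (0, 2), (3, 3), (2, 3), (1, 3), (0, 3)} (by decide) (by decide)
    tauto
  rcases h3.eq_or_lt with rfl | h3
  · have : a₂ = a₀ := by
      simpa [quadCoeff, add_neg_eq_zero, h0.ne', h2.ne'] using
        zero {(0, 0), (0, 1), (0, 3), (2, 2), (2, 3), (1, 2), (0, 2)} (by decide) (by decide)
    tauto
  simpa [quadCoeff, neg_add_eq_zero, eq_neg_iff_add_eq_zero, h0.ne', h2.ne', h3.ne',
    (add_pos h3 h2).ne'] using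
    zero {(0, 0), (0, 1), (2, 2), (3, 3), (2, 3), (1, 2), (1, 3)} (by decide) (by decide)

theorem numTerms_le_six_zero_zero (ha : numTerms 0 0 a₂ a₃ ≤ 6) (h2 : 0 ≤ a₂) (h3 : 0 ≤ a₃) :
    a₂ = 0 ∨ a₃ = 0 := by
  by_contra! h
  have h2 := h2.lt_of_ne' h.1
  have h3 := h3.lt_of_ne' h.2
  simpa [quadCoeff, neg_add_eq_zero, eq_neg_iff_add_eq_zero, h2.ne', h3.ne',
    (add_pos h3 h2).ne'] using
    exists_quadCoeff_eq_zero ha {(2, 2), (3, 3), (2, 3), (0, 2), (0, 3), (1, 2), (1, 3)}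
      (by decide) (by decide)

end

theorem exists_pos_eq_of_numQuadTerms_le (a : Fin 4 → ℝ)
    (ha : numQuadTerms ![1, 1, -1, -1] a ≤ 6)
    (hpos : ∀ x : Fin 4 → ℝ, (∀ i, 0 < x i) → x 2 + x 3 < x 0 + x 1 → 0 < a ⬝ᵥ x) :
    ∃ c, 0 < c ∧ (a = ![c, 0, 0, 0] ∨ a = ![0, c, 0, 0] ∨ a = ![0, 0, c, 0] ∨ a = ![0, 0, 0, c] ∨
      a = ![c, 0, c, 0] ∨ a = ![c, 0, 0, c] ∨ a = ![0, c, c, 0] ∨ a = ![0, c, 0, c] ∨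
      a = ![c, c, c, c]) := by
  obtain ⟨a₀, a₁, a₂, a₃, rfl⟩ : ∃ a₀ a₁ a₂ a₃ : ℝ, a = ![a₀, a₁, a₂, a₃] :=
    ⟨_, _, _, _, (FinVec.etaExpand_eq a).symm⟩
  have nonneg (v : Fin 4 → ℝ) (hv : ∀ i, 0 ≤ v i) (hv' : v 2 + v 3 ≤ v 0 + v 1) :
      0 ≤ a₀ * v 0 + a₁ * v 1 + a₂ * v 2 + a₃ * v 3 := by
    simpa [dotProduct, Fin.sum_univ_four] using dotProduct_nonneg_of_pos_on_cone hpos hv hv'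
  have h0 : 0 ≤ a₀ := by simpa using nonneg ![1, 0, 0, 0] (by simp [Fin.forall_fin_succ]) (by simp)
  have h1 : 0 ≤ a₁ := by simpa using nonneg ![0, 1, 0, 0] (by simp [Fin.forall_fin_succ]) (by simp)
  have h02 : 0 ≤ a₀ + a₂ := by
    simpa using nonneg ![1, 0, 1, 0] (by simp [Fin.forall_fin_succ]) (by simp)
  have h03 : 0 ≤ a₀ + a₃ := by
    simpa using nonneg ![1, 0, 0, 1] (by simp [Fin.forall_fin_succ]) (by simp)
  have h12 : 0 ≤ a₁ + a₂ := by
    simpa using nonneg ![0, 1, 1, 0] (by simp [Fin.forall_fin_succ]) (by simp)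
  have h13 : 0 ≤ a₁ + a₃ := by
    simpa using nonneg ![0, 1, 0, 1] (by simp [Fin.forall_fin_succ]) (by simp)
  have hw : 0 < 2 * a₀ + a₁ + a₂ + a₃ := by
    simpa [dotProduct, Fin.sum_univ_four, mul_comm] using
      hpos ![2, 1, 1, 1] (by simp [Fin.forall_fin_succ]) (by simp)
  rcases h0.eq_or_lt with rfl | h0 <;> rcases h1.eq_or_lt with rfl | h1
  · rcases numTerms_le_six_zero_zero ha (by linarith) (by linarith) with rfl | rfl
    · exact ⟨a₃, by linarith, by simp⟩
    · exact ⟨a₂, by linarith, by simp⟩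
  · rcases numTerms_le_six_zero_pos ha h1 (by linarith) (by linarith) with
      ⟨rfl, rfl⟩ | ⟨rfl, rfl⟩ | ⟨rfl, rfl⟩ <;> exact ⟨_, h1, by simp⟩
  · rcases numTerms_le_six_pos_zero ha h0 (by linarith) (by linarith) with
      ⟨rfl, rfl⟩ | ⟨rfl, rfl⟩ | ⟨rfl, rfl⟩ <;> exact ⟨_, h0, by simp⟩
  · obtain ⟨rfl, rfl, rfl⟩ := numTerms_le_six_pos_pos ha h0 h1
    exact ⟨_, h0, by simp⟩

/-- Let `Q = a₁x₁ + a₂x₂ + a₃x₃ + a₄x₄` and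
`P = (x₁ + x₂ − x₃ − x₄) * Q`. If `P` has at most `6` monomials and `Q(x) > 0` whenever
`x₁ + x₂ > x₃ + x₄` with all `xᵢ > 0`, then `Q` is a positive scalar multiple of one of
`x₁, x₂, x₃, x₄, x₁+x₃, x₁+x₄, x₂+x₃, x₂+x₄, x₁+x₂+x₃+x₄`. -/
theorem statement6 (a : Fin 4 → ℝ)
    (Q : MvPolynomial (Fin 4) ℝ) (hQ : Q = ∑ i : Fin 4, C (a i) * X i)
    (hcard : (((X 0 + X 1 - X 2 - X 3 : MvPolynomial (Fin 4) ℝ) * Q).support).card ≤ 6)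
    (hpos : ∀ x : Fin 4 → ℝ, (∀ i, 0 < x i) → x 2 + x 3 < x 0 + x 1 → 0 < eval x Q) :
    ∃ c : ℝ, 0 < c ∧
      (Q = C c * X 0 ∨ Q = C c * X 1 ∨ Q = C c * X 2 ∨ Q = C c * X 3 ∨
       Q = C c * (X 0 + X 2) ∨ Q = C c * (X 0 + X 3) ∨
       Q = C c * (X 1 + X 2) ∨ Q = C c * (X 1 + X 3) ∨
       Q = C c * (X 0 + X 1 + X 2 + X 3)) := by
  have hL : (X 0 + X 1 - X 2 - X 3 : MvPolynomial (Fin 4) ℝ) =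
      ∑ k, C (![1, 1, -1, -1] k) * X k := by
    simp [Fin.sum_univ_four, sub_eq_add_neg]
  have heval (x : Fin 4 → ℝ) : eval x Q = a ⬝ᵥ x := by
    simp [hQ, dotProduct]
  rw [hL, hQ] at hcard
  obtain ⟨c, hc, h⟩ := exists_pos_eq_of_numQuadTerms_le a
    ((numQuadTerms_le_card_support _ a).trans hcard) (fun x hx hx' => heval x ▸ hpos x hx hx')
  refine ⟨c, hc, ?_⟩
  rw [hQ]
  rcases h with rfl | rfl | rfl | rfl | rfl | rfl | rfl | rfl | rfl <;>
    simp [Fin.sum_univ_four, mul_add]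
end

section
/- Let r ≥ 3 be an integer and let Q be a homogeneous real polynomial in the variables x₁, …, x_{2r} all of whose coefficients are nonnegative and with n(Q) ≥ 2. Then the polynomial P = (x₁ + ⋯ + x_r − x_{r+1} − ⋯ − x_{2r}) · Q satisfies n(P) ≥ 2r + 3; in particular n(P) > 2r + 2. -/
/-!
Let `A` be the set of variables with sign `+` and grade monomials by their degree in the variables
of `A`. Since `Q` has nonnegative coefficients, a monomial `x_i s` with `i ∈ A` and `s` in the
support of `Q` gets a positive coefficient in `P` unless it also equals some `x_j t` with `j ∉ A`
and `t` in the support of `Q`; such a `t` has strictly larger degree than `s`. So if `s₁` is a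
monomial of `Q` of largest degree and `s₂` one of largest degree among the others, all `x_i s₁`
and all `x_i s₂` except those with `x_i s₂ = x_k s₁` for some `k` have positive coefficients.
As `s₁ ≠ s₂`, there is at most one such exceptional `i`, and it is the only possible coincidence
between the two families; this gives `2|A| - 1` positive coefficients. By symmetry there are
`2|Aᶜ| - 1` negative ones, so `n(P) ≥ 4r - 2 ≥ 2r + 3` once `r ≥ 3`.
-/

open MvPolynomial Finset

namespace Finsupp

variable {σ : Type*}

theorem eq_of_single_add_eq_single_add {s t : σ →₀ ℕ} (hst : s ≠ t)
    {i k i' k' : σ} (h : single i 1 + s = single k 1 + t)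
    (h' : single i' 1 + s = single k' 1 + t) : i = i' := by
  have hik : i ≠ k := by rintro rfl; exact hst (add_left_cancel h)
  have : single i 1 + single k' 1 = single i' 1 + single k 1 :=
    add_right_cancel (b := s + t) (by grind)
  rw [single_add_single_eq_single_add_single one_ne_zero one_ne_zero] at this
  grind

noncomputable def degreeOn (p : σ → Prop) [DecidablePred p] : (σ →₀ ℕ) →+ ℕ :=
  weight fun k => if p k then 1 else 0

theorem degreeOn_lt_of_single_add_eq {p : σ → Prop} [DecidablePred p] {i j : σ}
    (hi : p i) (hj : ¬ p j) {s t : σ →₀ ℕ}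
    (h : single j 1 + t = single i 1 + s) : degreeOn p s < degreeOn p t := by
  have := congrArg (degreeOn p) h
  simp only [degreeOn, map_add, weight_single, hi, hj, if_true, if_false, smul_eq_mul]
    at this ⊢
  omega

end Finsupp

open Finsupp (degreeOn single)

namespace MvPolynomial

variable {σ R : Type*} [CommRing R]

section posSupport

variable [LinearOrder R]

def posSupport (P : MvPolynomial σ R) : Finset (σ →₀ ℕ) :=
  {d ∈ P.support | 0 < P.coeff d}

theorem mem_posSupport {P : MvPolynomial σ R} {d : σ →₀ ℕ} :
    d ∈ posSupport P ↔ 0 < P.coeff d := by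
  simp only [posSupport, mem_filter, mem_support_iff, and_iff_right_iff_imp]
  exact ne_of_gt

theorem card_posSupport_add_card_posSupport_neg [IsOrderedRing R] (P : MvPolynomial σ R) :
    #(posSupport P) + #(posSupport (-P)) = #P.support := by
  rw [← card_filter_add_card_filter_not (s := P.support) (fun d => 0 < P.coeff d), posSupport,
    posSupport, support_neg]
  congr 2
  refine filter_congr fun d hd => ?_
  rw [coeff_neg, neg_pos, not_lt]
  exact ⟨fun h => h.le, fun h => h.lt_of_ne (mem_support_iff.mp hd)⟩

end posSupport

variable [Fintype σ] (p : σ → Prop) [DecidablePred p]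

noncomputable def signedSum : MvPolynomial σ R := ∑ i, C (if p i then 1 else -1) * X i

theorem signedSum_not : signedSum (R := R) (fun i => ¬ p i) = -signedSum p := by
  rw [signedSum, signedSum, ← sum_neg_distrib]
  refine sum_congr rfl fun i _ => ?_
  by_cases h : p i <;> simp [h]

variable {p} [LinearOrder R] [IsStrictOrderedRing R]

theorem coeff_signedSum_mul_pos {Q : MvPolynomial σ R} (hQ : ∀ d, 0 ≤ Q.coeff d) {i : σ}
    (hi : p i) {s : σ →₀ ℕ} (hs : s ∈ Q.support)
    (h : ∀ j, ¬ p j → ∀ t ∈ Q.support, single j 1 + t ≠ single i 1 + s) :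
    0 < (signedSum p * Q).coeff (single i 1 + s) := by
  classical
  rw [signedSum, Finset.sum_mul, coeff_sum]
  refine sum_pos' (fun k _ => ?_) ⟨i, mem_univ i, ?_⟩
  · rw [mul_assoc, coeff_C_mul]
    by_cases hk : p k
    · rw [if_pos hk, one_mul, coeff_X_mul']
      split_ifs
      exacts [hQ _, le_rfl]
    · have : single i 1 + s ∉ (X k * Q).support := by
        simpa [support_X_mul] using h k hk
      rw [notMem_support_iff.mp this, mul_zero]
  · rw [mul_assoc, coeff_C_mul, if_pos hi, one_mul, coeff_X_mul]
    exact (hQ s).lt_of_ne' (mem_support_iff.mp hs)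

theorem single_add_mem_posSupport {Q : MvPolynomial σ R} (hQ : ∀ d, 0 ≤ Q.coeff d) {i : σ}
    (hi : p i) {s : σ →₀ ℕ} (hs : s ∈ Q.support)
    (h : ∀ j, ¬ p j → ∀ t ∈ Q.support, degreeOn p s < degreeOn p t →
      single j 1 + t ≠ single i 1 + s) :
    single i 1 + s ∈ posSupport (signedSum p * Q) :=
  mem_posSupport.mpr <| coeff_signedSum_mul_pos hQ hi hs fun j hj t ht heq =>
    h j hj t ht (Finsupp.degreeOn_lt_of_single_add_eq hi hj heq) heq

theorem two_mul_card_le_card_posSupport_signedSum_mul_add_one {Q : MvPolynomial σ R}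
    (hQ : ∀ d, 0 ≤ Q.coeff d) (hcard : 2 ≤ #Q.support) :
    2 * #{i | p i} ≤ #(posSupport (signedSum p * Q)) + 1 := by
  classical
  set A : Finset σ := {i | p i}
  obtain ⟨s₁, hs₁, hmax₁⟩ := Q.support.exists_max_image (degreeOn p) (card_pos.mp (by omega))
  obtain ⟨s₂, hs₂, hmax₂⟩ := (Q.support.erase s₁).exists_max_image (degreeOn p)
    (card_pos.mp (by rw [card_erase_of_mem hs₁]; omega))
  set L := {i ∈ A | ∃ k, single i 1 + s₂ = single k 1 + s₁}
  have hL : #L ≤ 1 := card_le_one.mpr fun i hi i' hi' => by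
    obtain ⟨-, k, hk⟩ := mem_filter.mp hi
    obtain ⟨-, k', hk'⟩ := mem_filter.mp hi'
    exact Finsupp.eq_of_single_add_eq_single_add (ne_of_mem_erase hs₂) hk hk'
  set F₁ := A.image (single · 1 + s₁)
  set F₂ := (A \ L).image (single · 1 + s₂)
  have hF₁ : F₁ ⊆ posSupport (signedSum p * Q) := image_subset_iff.mpr fun i hi =>
    single_add_mem_posSupport hQ (mem_filter.mp hi).2 hs₁ fun _ _ t ht hlt _ =>
      (hmax₁ t ht).not_gt hlt
  have hF₂ : F₂ ⊆ posSupport (signedSum p * Q) := image_subset_iff.mpr fun i hi => by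
    obtain ⟨hiA, hiL⟩ := mem_sdiff.mp hi
    refine single_add_mem_posSupport hQ (mem_filter.mp hiA).2 (mem_of_mem_erase hs₂)
      fun j _ t ht hlt heq => hiL (mem_filter.mpr ⟨hiA, j, ?_⟩)
    obtain rfl : t = s₁ := by
      by_contra hne
      exact (hmax₂ t (mem_erase.mpr ⟨hne, ht⟩)).not_gt hlt
    exact heq.symm
  have hdisj : Disjoint F₁ F₂ := disjoint_right.mpr fun d hd₂ hd₁ => by
    obtain ⟨i, hi, rfl⟩ := mem_image.mp hd₂
    obtain ⟨k, -, hk⟩ := mem_image.mp hd₁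
    exact (mem_sdiff.mp hi).2 (mem_filter.mpr ⟨(mem_sdiff.mp hi).1, k, hk.symm⟩)
  have hinj (s : σ →₀ ℕ) : Function.Injective (single · 1 + s) :=
    (add_left_injective s).comp (Finsupp.single_left_injective one_ne_zero)
  have hF₁card : #F₁ = #A := card_image_of_injective _ (hinj s₁)
  have hF₂card : #F₂ = #A - #L := by
    rw [card_image_of_injective _ (hinj s₂), card_sdiff_of_subset (filter_subset _ _)]
  calc 2 * #A ≤ #F₁ + #F₂ + 1 := by omega
    _ = #(F₁ ∪ F₂) + 1 := by rw [card_union_of_disjoint hdisj]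
    _ ≤ #(posSupport (signedSum p * Q)) + 1 := by gcongr; exact union_subset hF₁ hF₂

theorem card_support_signedSum_mul {Q : MvPolynomial σ R}
    (hQ : ∀ d, 0 ≤ Q.coeff d) (hcard : 2 ≤ #Q.support) :
    2 * #{i | p i} + 2 * #{i | ¬ p i} ≤ #(signedSum p * Q).support + 2 := by
  have hpos := two_mul_card_le_card_posSupport_signedSum_mul_add_one (p := p) hQ hcard
  have hneg := two_mul_card_le_card_posSupport_signedSum_mul_add_one (p := (¬ p ·)) hQ hcard
  rw [signedSum_not, neg_mul] at hneg
  have := card_posSupport_add_card_posSupport_neg (signedSum p * Q)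
  omega

end MvPolynomial

theorem statement7_general (r : ℕ) (hr : 3 ≤ r)
    (Q : MvPolynomial (Fin (2 * r)) ℝ)
    (hnonneg : ∀ d, 0 ≤ Q.coeff d)
    (hcard : 2 ≤ Q.support.card) :
    2 * r + 3 ≤
        (((∑ i : Fin (2 * r), C (if (i : ℕ) < r then (1 : ℝ) else -1) * X i) * Q).support).card ∧
      2 * r + 2 <
        (((∑ i : Fin (2 * r), C (if (i : ℕ) < r then (1 : ℝ) else -1) * X i) * Q).support).card := by
  have hP := card_support_signedSum_mul (p := fun i : Fin (2 * r) => (i : ℕ) < r) hnonneg hcard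
  have hlt : #{i : Fin (2 * r) | (i : ℕ) < r} = r := by simp [Fin.card_filter_val_lt]; omega
  have hge : #{i : Fin (2 * r) | ¬ (i : ℕ) < r} = r := by
    have := card_filter_add_card_filter_not (s := univ) fun i : Fin (2 * r) => (i : ℕ) < r
    rw [card_univ, Fintype.card_fin, hlt] at this
    omega
  simp only [signedSum, hlt, hge] at hP
  exact ⟨by omega, by omega⟩

/-- For `r ≥ 3` and a homogeneous polynomial `Q` in `x₁, …, x_{2r}` with
nonnegative coefficients and at least two monomials, the polynomial
`P = (x₁ + ⋯ + x_r − x_{r+1} − ⋯ − x_{2r}) * Q` has at least `2r + 3` monomials;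
in particular it has more than `2r + 2` monomials. -/
theorem statement7 (r : ℕ) (hr : 3 ≤ r)
    (Q : MvPolynomial (Fin (2 * r)) ℝ)
    (n : ℕ) (hhom : Q.IsHomogeneous n)
    (hnonneg : ∀ d, 0 ≤ Q.coeff d)
    (hcard : 2 ≤ Q.support.card) :
    2 * r + 3 ≤
        (((∑ i : Fin (2 * r), C (if (i : ℕ) < r then (1 : ℝ) else -1) * X i) * Q).support).card ∧
      2 * r + 2 <
        (((∑ i : Fin (2 * r), C (if (i : ℕ) < r then (1 : ℝ) else -1) * X i) * Q).support).card :=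
  statement7_general r hr Q hnonneg hcard
end

section
/- Let r, s, r′, s′ ≥ 1. Let f : Ω_{r,s} → Ω_{r′,s′} be a continuous map, and let g be a continuous map from the closure of D_{r,s} in ℙ^{r+s−1} to the closure of D_{r′,s′} in ℙ^{r′+s′−1} such that g maps the boundary ∂D_{r,s} = {[z] : |z₁|² + ⋯ + |z_r|² = |z_{r+1}|² + ⋯ + |z_{r+s}|²} into ∂D_{r′,s′}. Suppose that for every Z ∈ Ω_{r,s} and every nonzero row vector a ∈ ℂ^r, writing g([a, aZ]) = [a′, b′] with a′ ∈ ℂ^{r′} and b′ ∈ ℂ^{s′}, one has a′ · f(Z) = b′. Then f is a proper map, i.e., the preimage under f of every compact subset of Ω_{r′,s′} is compact. -/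
/-!
`Ω_{r,s}` is bounded, so every ultrafilter on `f⁻¹(K)` converges to some `Z` in the closure of
`Ω_{r,s}`, and `f` pushes it to a limit `W ∈ K`; properness amounts to `Z ∈ Ω_{r,s}`. Otherwise
some `a ≠ 0` has `|aZ| = |a|`, so `[a, aZ] ∈ ∂D_{r,s}` and `g([a, aZ]) ∈ ∂D_{r',s'}`. But each
`g([a, aZ'])` has the form `[a', a'f(Z')]`; this incidence between `f(Z')` and `g([a, aZ'])` is
a closed condition, so in the limit `g([a, aZ]) = [a', a'W]` with `W ∈ Ω_{r',s'}`, a point of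
`D_{r',s'}` and not of its boundary.
-/

open Matrix
open scoped ComplexOrder LinearAlgebra.Projectivization

/-- The quotient topology on projectivizations (a point of `ℙ K V` is an equivalence class
of nonzero vectors of `V`). -/
noncomputable instance {K V : Type*} [DivisionRing K] [AddCommGroup V] [Module K V]
    [TopologicalSpace V] : TopologicalSpace (ℙ K V) :=
  instTopologicalSpaceQuotient

/-- The type I bounded symmetric domain `Ω_{r,s}`. -/
def OmegaI (r s : ℕ) : Set (Matrix (Fin r) (Fin s) ℂ) :=
  {Z | (1 - Z * Zᴴ).PosDef}

/-- The generalized ball `D_{r,s} ⊂ ℙ^{r+s-1}`, i.e. the points whose homogeneous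
coordinates satisfy `|z₁|² + ⋯ + |z_r|² > |z_{r+1}|² + ⋯ + |z_{r+s}|²`. -/
def genBall (r s : ℕ) : Set (ℙ ℂ (Fin (r + s) → ℂ)) :=
  {p | ∑ j : Fin s, ‖p.rep (Fin.natAdd r j)‖ ^ 2 < ∑ i : Fin r, ‖p.rep (Fin.castAdd s i)‖ ^ 2}

/-- The boundary `∂D_{r,s}`: points whose homogeneous coordinates satisfy
`|z₁|² + ⋯ + |z_r|² = |z_{r+1}|² + ⋯ + |z_{r+s}|²`. -/
def genBallBdry (r s : ℕ) : Set (ℙ ℂ (Fin (r + s) → ℂ)) :=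
  {p | ∑ i : Fin r, ‖p.rep (Fin.castAdd s i)‖ ^ 2 = ∑ j : Fin s, ‖p.rep (Fin.natAdd r j)‖ ^ 2}

open Filter Topology

namespace Projectivization

variable {K V : Type*} [DivisionRing K] [AddCommGroup V] [Module K V] [TopologicalSpace V]

theorem isQuotientMap_mk' : IsQuotientMap (mk' K : {v : V // v ≠ 0} → ℙ K V) :=
  isQuotientMap_quotient_mk'

theorem isOpenQuotientMap_mk' [ContinuousConstSMul K V] :
    IsOpenQuotientMap (mk' K : {v : V // v ≠ 0} → ℙ K V) := by
  refine ⟨Quot.mk_surjective, isQuotientMap_mk'.continuous, fun U hU => ?_⟩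
  have hsat : mk' K ⁻¹' (mk' K '' U) =
      ⋃ c : Kˣ, (fun v : {v : V // v ≠ 0} => (⟨(c : K) • v.1, smul_ne_zero c.ne_zero v.2⟩ :
        {v : V // v ≠ 0})) ⁻¹' U := by
    ext ⟨w, hw⟩
    simp only [Set.mem_preimage, Set.mem_image, Set.mem_iUnion, mk'_eq_mk]
    constructor
    · rintro ⟨⟨u, hu⟩, huU, huw⟩
      obtain ⟨c, rfl⟩ := (mk_eq_mk_iff K u w hu hw).mp huw
      exact ⟨c, huU⟩
    · rintro ⟨c, hc⟩
      exact ⟨_, hc, (mk_eq_mk_iff K _ w _ hw).mpr ⟨c, rfl⟩⟩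
  rw [← isQuotientMap_mk'.isOpen_preimage, hsat]
  exact isOpen_iUnion fun c => hU.preimage <|
    (continuous_const_smul (c : K)).comp continuous_subtype_val |>.subtype_mk _

end Projectivization

section OmegaI

variable {r s : ℕ}

theorem star_dotProduct_one_sub_mul_conjTranspose_mulVec (Z : Matrix (Fin r) (Fin s) ℂ)
    (x : Fin r → ℂ) :
    star x ⬝ᵥ ((1 - Z * Zᴴ) *ᵥ x)
      = ((∑ i, ‖x i‖ ^ 2 - ∑ j, ‖(star x ᵥ* Z) j‖ ^ 2 : ℝ) : ℂ) := by
  have hZ : Zᴴ *ᵥ x = star (star x ᵥ* Z) := by rw [star_vecMul, star_star]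
  rw [sub_mulVec, dotProduct_sub, one_mulVec, ← mulVec_mulVec, dotProduct_mulVec, hZ]
  simp [dotProduct, Complex.conj_mul', Complex.mul_conj', Complex.ofReal_sum]

theorem mem_OmegaI_iff {Z : Matrix (Fin r) (Fin s) ℂ} :
    Z ∈ OmegaI r s ↔ ∀ a : Fin r → ℂ, a ≠ 0 → ∑ j, ‖(a ᵥ* Z) j‖ ^ 2 < ∑ i, ‖a i‖ ^ 2 := by
  have hHerm : (1 - Z * Zᴴ).IsHermitian :=
    isHermitian_one.sub (isHermitian_mul_conjTranspose_self Z)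
  simp only [OmegaI, Set.mem_ofPred_eq, posDef_iff_dotProduct_mulVec, hHerm, true_and,
    star_dotProduct_one_sub_mul_conjTranspose_mulVec, Complex.zero_lt_real, sub_pos]
  refine (Function.Involutive.surjective star_involutive).forall.trans (forall_congr' fun a => ?_)
  simp

theorem OmegaI_subset_pi_closedBall :
    OmegaI r s ⊆ Set.univ.pi fun _ => Set.univ.pi fun _ => Metric.closedBall (0 : ℂ) 1 := by
  intro Z hZ i _ j _
  have hrow := mem_OmegaI_iff.mp hZ (Pi.single i 1) (Pi.single_ne_zero_iff.mpr one_ne_zero)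
  rw [single_one_vecMul, Finset.sum_eq_single_of_mem i (Finset.mem_univ i)
    (fun k _ hk => by simp [hk])] at hrow
  have hentry : ‖Z i j‖ ^ 2 ≤ ∑ j', ‖Z i j'‖ ^ 2 :=
    Finset.single_le_sum (f := fun j' => ‖Z i j'‖ ^ 2) (fun _ _ => by positivity)
      (Finset.mem_univ j)
  simp only [Pi.single_eq_same, norm_one, one_pow, row_apply] at hrow
  rw [Metric.mem_closedBall, dist_zero_right]
  nlinarith [norm_nonneg (Z i j)]

end OmegaI

section GenBall

variable {r s : ℕ}

theorem Fin.append_ne_zero_of_left {α : Type*} [Zero α] {a : Fin r → α} (ha : a ≠ 0)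
    (b : Fin s → α) :
    Fin.append a b ≠ 0 := fun h =>
  ha <| funext fun i => by simpa using congrFun h (Fin.castAdd s i)

theorem mk_append_mem_genBall_iff {a : Fin r → ℂ} {b : Fin s → ℂ} (h : Fin.append a b ≠ 0) :
    Projectivization.mk ℂ (Fin.append a b) h ∈ genBall r s ↔
      ∑ j, ‖b j‖ ^ 2 < ∑ i, ‖a i‖ ^ 2 := by
  obtain ⟨c, hc⟩ := Projectivization.exists_smul_eq_mk_rep ℂ _ h
  simp only [genBall, Set.mem_ofPred_eq, ← hc, Units.smul_def, Pi.smul_apply, Fin.append_left,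
    Fin.append_right, smul_eq_mul, norm_mul, mul_pow, ← Finset.mul_sum]
  exact mul_lt_mul_iff_right₀ (by simp)

theorem mk_append_mem_genBallBdry_iff {a : Fin r → ℂ} {b : Fin s → ℂ}
    (h : Fin.append a b ≠ 0) :
    Projectivization.mk ℂ (Fin.append a b) h ∈ genBallBdry r s ↔
      ∑ i, ‖a i‖ ^ 2 = ∑ j, ‖b j‖ ^ 2 := by
  obtain ⟨c, hc⟩ := Projectivization.exists_smul_eq_mk_rep ℂ _ h
  simp only [genBallBdry, Set.mem_ofPred_eq, ← hc, Units.smul_def, Pi.smul_apply,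
    Fin.append_left, Fin.append_right, smul_eq_mul, norm_mul, mul_pow, ← Finset.mul_sum]
  exact mul_right_inj' (by simp)

theorem disjoint_genBall_genBallBdry : Disjoint (genBall r s) (genBallBdry r s) :=
  Set.disjoint_left.mpr fun _ hball hbdry => hball.ne hbdry.symm

theorem Projectivization.exists_eq_mk_append {K : Type*} [DivisionRing K]
    (p : ℙ K (Fin (r + s) → K)) :
    ∃ (a : Fin r → K) (b : Fin s → K) (h : Fin.append a b ≠ 0),
      p = Projectivization.mk K (Fin.append a b) h := by
  refine ⟨fun i => p.rep (Fin.castAdd s i), fun j => p.rep (Fin.natAdd r j), ?_, ?_⟩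
  · rw [Fin.append_castAdd_natAdd]
    exact p.rep_nonzero
  · simp_rw [Fin.append_castAdd_natAdd, p.mk_rep]

end GenBall

section Graph

variable {r s : ℕ}

noncomputable def graphPoint {a : Fin r → ℂ} (ha : a ≠ 0) (Z : Matrix (Fin r) (Fin s) ℂ) :
    ℙ ℂ (Fin (r + s) → ℂ) :=
  Projectivization.mk ℂ (Fin.append a (a ᵥ* Z)) (Fin.append_ne_zero_of_left ha _)

theorem continuous_graphPoint {a : Fin r → ℂ} (ha : a ≠ 0) :
    Continuous (graphPoint (s := s) ha) :=
  Projectivization.isQuotientMap_mk'.continuous.comp <| Continuous.subtype_mk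
    ((Fin.continuous_append r s).comp
      (continuous_const.prodMk (continuous_const.matrix_vecMul continuous_id))) _

theorem graphPoint_mem_genBall {a : Fin r → ℂ} (ha : a ≠ 0) {Z : Matrix (Fin r) (Fin s) ℂ}
    (hZ : Z ∈ OmegaI r s) : graphPoint ha Z ∈ genBall r s :=
  (mk_append_mem_genBall_iff _).mpr (mem_OmegaI_iff.mp hZ a ha)

theorem graphPoint_mem_genBallBdry_iff {a : Fin r → ℂ} (ha : a ≠ 0)
    {Z : Matrix (Fin r) (Fin s) ℂ} :
    graphPoint ha Z ∈ genBallBdry r s ↔ ∑ i, ‖a i‖ ^ 2 = ∑ j, ‖(a ᵥ* Z) j‖ ^ 2 :=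
  mk_append_mem_genBallBdry_iff _

def graphIncidence (r s : ℕ) : Set (Matrix (Fin r) (Fin s) ℂ × ℙ ℂ (Fin (r + s) → ℂ)) :=
  {x | ∀ (a : Fin r → ℂ) (b : Fin s → ℂ) (h : Fin.append a b ≠ 0),
    x.2 = Projectivization.mk ℂ (Fin.append a b) h → a ᵥ* x.1 = b}

theorem mk_append_mem_graphIncidence_iff {W : Matrix (Fin r) (Fin s) ℂ} {a : Fin r → ℂ}
    {b : Fin s → ℂ} (h : Fin.append a b ≠ 0) :
    (W, Projectivization.mk ℂ (Fin.append a b) h) ∈ graphIncidence r s ↔ a ᵥ* W = b := by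
  refine ⟨fun hW => hW a b h rfl, fun hab a' b' h' heq => ?_⟩
  obtain ⟨c, hc⟩ := (Projectivization.mk_eq_mk_iff' ℂ _ _ h' h).mp heq.symm
  have ha' : a' = c • a := funext fun i => by simpa using (congrFun hc (Fin.castAdd s i)).symm
  have hb' : b' = c • b := funext fun j => by simpa using (congrFun hc (Fin.natAdd r j)).symm
  rw [ha', hb', smul_vecMul, hab]

theorem isClosed_graphIncidence : IsClosed (graphIncidence r s) := by
  rw [← (IsOpenQuotientMap.id.prodMap
    Projectivization.isOpenQuotientMap_mk').isQuotientMap.isClosed_preimage]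
  have hpre : Prod.map id (Projectivization.mk' ℂ) ⁻¹' graphIncidence r s =
      {x : Matrix (Fin r) (Fin s) ℂ × {v : Fin (r + s) → ℂ // v ≠ 0} |
        (fun i => x.2.1 (Fin.castAdd s i)) ᵥ* x.1 = fun j => x.2.1 (Fin.natAdd r j)} := by
    ext ⟨W, v, hv⟩
    obtain ⟨a, b, rfl⟩ : ∃ a b, v = Fin.append a b := ⟨_, _, Fin.append_castAdd_natAdd.symm⟩
    simp [Projectivization.mk'_eq_mk, mk_append_mem_graphIncidence_iff]
  have hcoord (k : Fin (r + s)) :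
      Continuous fun x : Matrix (Fin r) (Fin s) ℂ × {v : Fin (r + s) → ℂ // v ≠ 0} => x.2.1 k :=
    (continuous_apply k).comp (continuous_subtype_val.comp continuous_snd)
  rw [hpre]
  exact isClosed_eq ((continuous_pi fun i => hcoord _).matrix_vecMul continuous_fst)
    (continuous_pi fun j => hcoord _)

theorem mem_genBall_of_mem_graphIncidence {W : Matrix (Fin r) (Fin s) ℂ}
    {p : ℙ ℂ (Fin (r + s) → ℂ)} (hW : W ∈ OmegaI r s) (hp : (W, p) ∈ graphIncidence r s) :
    p ∈ genBall r s := by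
  obtain ⟨a, b, h, rfl⟩ := Projectivization.exists_eq_mk_append p
  obtain rfl := (mk_append_mem_graphIncidence_iff h).mp hp
  have ha : a ≠ 0 := by
    rintro rfl
    rw [zero_vecMul] at h
    exact h (Fin.append_castAdd_natAdd (f := (0 : Fin (r + s) → ℂ)))
  exact graphPoint_mem_genBall ha hW

end Graph

theorem mem_OmegaI_of_tendsto {r s r' s' : ℕ} {f : OmegaI r s → OmegaI r' s'}
    {g : closure (genBall r s) → closure (genBall r' s')} (hg : Continuous g)
    (hbdry : ∀ p : closure (genBall r s),
      (p : ℙ ℂ (Fin (r + s) → ℂ)) ∈ genBallBdry r s →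
      ((g p : ℙ ℂ (Fin (r' + s') → ℂ)) ∈ genBallBdry r' s'))
    (hgraph : ∀ (Z : OmegaI r s) (a : Fin r → ℂ) (ha : a ≠ 0),
      ((f Z : Matrix (Fin r') (Fin s') ℂ),
        (g ⟨graphPoint ha Z, subset_closure (graphPoint_mem_genBall ha Z.2)⟩ :
          ℙ ℂ (Fin (r' + s') → ℂ))) ∈ graphIncidence r' s')
    {l : Filter (OmegaI r s)} [l.NeBot] {Z : Matrix (Fin r) (Fin s) ℂ} {W : OmegaI r' s'}
    (hZ : Tendsto Subtype.val l (𝓝 Z)) (hW : Tendsto f l (𝓝 W)) : Z ∈ OmegaI r s := by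
  by_contra hZΩ
  obtain ⟨a, ha, hge⟩ : ∃ a : Fin r → ℂ, a ≠ 0 ∧ ∑ i, ‖a i‖ ^ 2 ≤ ∑ j, ‖(a ᵥ* Z) j‖ ^ 2 := by
    simpa [mem_OmegaI_iff] using hZΩ
  have hle : ∑ j, ‖(a ᵥ* Z) j‖ ^ 2 ≤ ∑ i, ‖a i‖ ^ 2 :=
    le_of_tendsto' (((by fun_prop : Continuous fun Z : Matrix (Fin r) (Fin s) ℂ =>
      ∑ j, ‖(a ᵥ* Z) j‖ ^ 2).tendsto Z).comp hZ) fun Z' => (mem_OmegaI_iff.mp Z'.2 a ha).le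
  have hpZ : Tendsto (fun Z' : OmegaI r s => graphPoint ha Z'.1) l (𝓝 (graphPoint ha Z)) :=
    ((continuous_graphPoint ha).tendsto Z).comp hZ
  let pZ : closure (genBall r s) := ⟨graphPoint ha Z,
    mem_closure_of_tendsto hpZ (Eventually.of_forall fun Z' => graphPoint_mem_genBall ha Z'.2)⟩
  have hp : Tendsto (fun Z' : OmegaI r s =>
      (⟨graphPoint ha Z', subset_closure (graphPoint_mem_genBall ha Z'.2)⟩ :
        closure (genBall r s))) l (𝓝 pZ) :=
    tendsto_subtype_rng.mpr hpZ
  have hlim : ((W : Matrix (Fin r') (Fin s') ℂ), (g pZ : ℙ ℂ (Fin (r' + s') → ℂ))) ∈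
      graphIncidence r' s' :=
    isClosed_graphIncidence.mem_of_tendsto
      (((continuous_subtype_val.tendsto W).comp hW).prodMk_nhds
        (((continuous_subtype_val.comp hg).tendsto pZ).comp hp))
      (Eventually.of_forall fun Z' => hgraph Z' a ha)
  exact disjoint_genBall_genBallBdry.ne_of_mem (mem_genBall_of_mem_graphIncidence W.2 hlim)
    (hbdry pZ ((graphPoint_mem_genBallBdry_iff ha).mpr (hge.antisymm hle))) rfl

theorem statement9_general (r s r' s' : ℕ)
    (f : OmegaI r s → OmegaI r' s') (hf : Continuous f)
    (g : closure (genBall r s) → closure (genBall r' s')) (hg : Continuous g)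
    (hbdry : ∀ p : closure (genBall r s),
      (p : ℙ ℂ (Fin (r + s) → ℂ)) ∈ genBallBdry r s →
      ((g p : ℙ ℂ (Fin (r' + s') → ℂ)) ∈ genBallBdry r' s'))
    (hcomp : ∀ (Z : Matrix (Fin r) (Fin s) ℂ) (hZ : Z ∈ OmegaI r s)
      (a : Fin r → ℂ) (ha : a ≠ 0) (h0 : Fin.append a (a ᵥ* Z) ≠ 0)
      (hmem : Projectivization.mk ℂ (Fin.append a (a ᵥ* Z)) h0 ∈ closure (genBall r s))
      (a' : Fin r' → ℂ) (b' : Fin s' → ℂ) (h0' : Fin.append a' b' ≠ 0),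
      (g ⟨Projectivization.mk ℂ (Fin.append a (a ᵥ* Z)) h0, hmem⟩ : ℙ ℂ (Fin (r' + s') → ℂ))
          = Projectivization.mk ℂ (Fin.append a' b') h0' →
      a' ᵥ* (f ⟨Z, hZ⟩ : Matrix (Fin r') (Fin s') ℂ) = b') :
    ∀ K : Set (OmegaI r' s'), IsCompact K → IsCompact (f ⁻¹' K) := by
  intro K hK
  rw [isCompact_iff_ultrafilter_le_nhds]
  intro U hU
  have hbox := isCompact_univ_pi fun _ : Fin r => isCompact_univ_pi fun _ : Fin s =>
    isCompact_closedBall (0 : ℂ) 1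
  obtain ⟨Z, -, hZ⟩ := hbox.ultrafilter_le_nhds (U.map Subtype.val) <| le_principal_iff.mpr <|
    Ultrafilter.mem_map.mpr <| univ_mem' fun Z => OmegaI_subset_pi_closedBall Z.2
  obtain ⟨W, -, hW⟩ := hK.ultrafilter_le_nhds (U.map f) (by simpa using hU)
  have hZΩ : Z ∈ OmegaI r s := mem_OmegaI_of_tendsto hg hbdry
    (fun Z a ha a' b' h' => hcomp Z.1 Z.2 a ha _ _ a' b' h') hZ hW
  have hUZ : Tendsto id (U : Filter (OmegaI r s)) (𝓝 ⟨Z, hZΩ⟩) := tendsto_subtype_rng.mpr hZ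
  exact ⟨⟨Z, hZΩ⟩, (hK.isClosed.preimage hf).mem_of_tendsto hUZ (le_principal_iff.mp hU), hUZ⟩

/-- Let `f : Ω_{r,s} → Ω_{r′,s′}` be continuous and let
`g : cl(D_{r,s}) → cl(D_{r′,s′})` be continuous with `g(∂D_{r,s}) ⊆ ∂D_{r′,s′}`.
If for every `Z ∈ Ω_{r,s}` and every nonzero row vector `a`, writing
`g([a, aZ]) = [a′, b′]` one has `a′ · f(Z) = b′`, then `f` is a proper map. -/
theorem statement9 (r s r' s' : ℕ) (hr : 1 ≤ r) (hs : 1 ≤ s) (hr' : 1 ≤ r') (hs' : 1 ≤ s')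
    (f : OmegaI r s → OmegaI r' s') (hf : Continuous f)
    (g : closure (genBall r s) → closure (genBall r' s')) (hg : Continuous g)
    (hbdry : ∀ p : closure (genBall r s),
      (p : ℙ ℂ (Fin (r + s) → ℂ)) ∈ genBallBdry r s →
      ((g p : ℙ ℂ (Fin (r' + s') → ℂ)) ∈ genBallBdry r' s'))
    (hcomp : ∀ (Z : Matrix (Fin r) (Fin s) ℂ) (hZ : Z ∈ OmegaI r s)
      (a : Fin r → ℂ) (ha : a ≠ 0) (h0 : Fin.append a (a ᵥ* Z) ≠ 0)
      (hmem : Projectivization.mk ℂ (Fin.append a (a ᵥ* Z)) h0 ∈ closure (genBall r s))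
      (a' : Fin r' → ℂ) (b' : Fin s' → ℂ) (h0' : Fin.append a' b' ≠ 0),
      (g ⟨Projectivization.mk ℂ (Fin.append a (a ᵥ* Z)) h0, hmem⟩ : ℙ ℂ (Fin (r' + s') → ℂ))
          = Projectivization.mk ℂ (Fin.append a' b') h0' →
      a' ᵥ* (f ⟨Z, hZ⟩ : Matrix (Fin r') (Fin s') ℂ) = b') :
    ∀ K : Set (OmegaI r' s'), IsCompact K → IsCompact (f ⁻¹' K) :=
  statement9_general r s r' s' f hf g hg hbdry hcomp
end

section
/- Define f : M(2×2, ℂ) → M(3×3, ℂ) by sending Z with entries z₁ = Z₁₁, z₂ = Z₁₂, z₃ = Z₂₁, z₄ = Z₂₂ to the matrix with rows (z₁², z₁z₂, z₂), (z₁z₃, z₂z₃, z₄), (z₃, z₄, 0). Then f maps Ω_{2,2} into Ω_{3,3}, and the restriction f : Ω_{2,2} → Ω_{3,3} is a proper map, i.e., the preimage under f of every compact subset of Ω_{3,3} is compact. -/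
/-!
With `Q_Z(w) = wᴴ (1 - Z Zᴴ) w`, a direct computation gives, for `v ∈ ℂ³`,
`vᴴ (1 - f(Z) f(Z)ᴴ) v = Q_Z(a, v₂) + Q_Z(v₀, v₁)` where `a = (Zᴴ (v₀, v₁))₀`.
Hence `f` maps `Ω_{2,2}` into `Ω_{3,3}`. Conversely, if `1 - Z Zᴴ` is only positive
semidefinite with a kernel vector `x ≠ 0`, one chooses `v ≠ 0` making both `(v₀, v₁)` and
`(a, v₂)` multiples of `x`, so `1 - f(Z) f(Z)ᴴ` is not positive definite. Therefore the preimage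
of a compact `K ⊆ Ω_{3,3}` is the closed set `f⁻¹(K)` intersected with the compact set
`{Z | 1 - Z Zᴴ ≥ 0}`.
-/

open Matrix
open scoped ComplexOrder

/-- The map `f` of Statement 12. -/
def whitneyMap (Z : Matrix (Fin 2) (Fin 2) ℂ) : Matrix (Fin 3) (Fin 3) ℂ :=
  !![Z 0 0 ^ 2,       Z 0 0 * Z 0 1,  Z 0 1;
     Z 0 0 * Z 1 0,   Z 0 1 * Z 1 0,  Z 1 1;
     Z 1 0,           Z 1 1,          0]

namespace Matrix

variable {m n 𝕜 : Type*} [Fintype n] [RCLike 𝕜]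

lemma isClosed_setOf_posSemidef : IsClosed {A : Matrix n n 𝕜 | A.PosSemidef} := by
  simp_rw [posSemidef_iff_dotProduct_mulVec, Set.ofPred_and, Set.ofPred_forall]
  exact (isClosed_eq continuous_id.matrix_conjTranspose continuous_id).inter
    (isClosed_iInter fun x => isClosed_le continuous_const
      (continuous_const.dotProduct (continuous_id.matrix_mulVec continuous_const)))

variable [DecidableEq m]

lemma norm_le_one_of_posSemidef_one_sub_mul_conjTranspose {Z : Matrix m n 𝕜}
    (hZ : (1 - Z * Zᴴ).PosSemidef) (i : m) (j : n) : ‖Z i j‖ ≤ 1 := by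
  have hdiag : ((∑ k, ‖Z i k‖ ^ 2 : ℝ) : 𝕜) ≤ 1 := by
    simpa [mul_apply, RCLike.mul_conj] using hZ.diag_nonneg (i := i)
  have hsum : ∑ k, ‖Z i k‖ ^ 2 ≤ 1 := by exact_mod_cast hdiag
  have hj : ‖Z i j‖ ^ 2 ≤ 1 :=
    (Finset.single_le_sum (fun k _ => sq_nonneg ‖Z i k‖) (Finset.mem_univ j)).trans hsum
  exact (sq_le_one_iff₀ (norm_nonneg _)).mp hj

lemma isCompact_setOf_posSemidef_one_sub_mul_conjTranspose [Fintype m] :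
    IsCompact {Z : Matrix m n 𝕜 | (1 - Z * Zᴴ).PosSemidef} := by
  have hbox : IsCompact (Set.univ.pi fun _ : m => Set.univ.pi fun _ : n =>
      Metric.closedBall (0 : 𝕜) 1) :=
    isCompact_univ_pi fun _ => isCompact_univ_pi fun _ => isCompact_closedBall _ _
  refine hbox.of_isClosed_subset (isClosed_setOf_posSemidef.preimage (by fun_prop)) fun Z hZ => ?_
  simpa using norm_le_one_of_posSemidef_one_sub_mul_conjTranspose hZ

end Matrix

lemma whitneyMap_form_eq (Z : Matrix (Fin 2) (Fin 2) ℂ) (v : Fin 3 → ℂ) :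
    star v ⬝ᵥ ((1 - whitneyMap Z * (whitneyMap Z)ᴴ) *ᵥ v)
      = star ![(Zᴴ *ᵥ ![v 0, v 1]) 0, v 2] ⬝ᵥ
          ((1 - Z * Zᴴ) *ᵥ ![(Zᴴ *ᵥ ![v 0, v 1]) 0, v 2])
        + star ![v 0, v 1] ⬝ᵥ ((1 - Z * Zᴴ) *ᵥ ![v 0, v 1]) := by
  simp [whitneyMap, dotProduct, mulVec, mul_apply, one_apply, Fin.sum_univ_three,
    Fin.sum_univ_two, vecMul, conjTranspose_apply]
  ring

lemma posDef_whitneyMap {Z : Matrix (Fin 2) (Fin 2) ℂ} (hZ : (1 - Z * Zᴴ).PosDef) :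
    (1 - whitneyMap Z * (whitneyMap Z)ᴴ).PosDef := by
  refine PosDef.of_dotProduct_mulVec_pos
    (isHermitian_one.sub (isHermitian_mul_conjTranspose_self _)) fun v hv => ?_
  rw [whitneyMap_form_eq]
  by_cases hv01 : ![v 0, v 1] = 0
  · have hv2 : v 2 ≠ 0 := fun hv2 => hv <| by
      ext i; fin_cases i
      exacts [congrFun hv01 0, congrFun hv01 1, hv2]
    exact add_pos_of_pos_of_nonneg (hZ.dotProduct_mulVec_pos (by simp [hv2]))
      (hZ.posSemidef.dotProduct_mulVec_nonneg _)
  · exact add_pos_of_nonneg_of_pos (hZ.posSemidef.dotProduct_mulVec_nonneg _)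
      (hZ.dotProduct_mulVec_pos hv01)

lemma exists_ne_zero_whitneyMap_form_eq_zero {Z : Matrix (Fin 2) (Fin 2) ℂ} {x : Fin 2 → ℂ}
    (hx : (1 - Z * Zᴴ) *ᵥ x = 0) (hx0 : x ≠ 0) :
    ∃ v ≠ 0, star v ⬝ᵥ ((1 - whitneyMap Z * (whitneyMap Z)ᴴ) *ᵥ v) = 0 := by
  have hform {v : Fin 3 → ℂ} (c d : ℂ) (hc : ![(Zᴴ *ᵥ ![v 0, v 1]) 0, v 2] = c • x)
      (hd : ![v 0, v 1] = d • x) :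
      star v ⬝ᵥ ((1 - whitneyMap Z * (whitneyMap Z)ᴴ) *ᵥ v) = 0 := by
    rw [whitneyMap_form_eq, hc, hd, mulVec_smul, mulVec_smul, hx]
    simp
  by_cases h0 : x 0 = 0
  · have h1 : x 1 ≠ 0 := fun h1 => hx0 (by ext i; fin_cases i <;> assumption)
    refine ⟨![0, 0, 1], by simp, hform (x 1)⁻¹ 0 ?_ ?_⟩ <;>
      ext i <;> fin_cases i <;> simp [h0, h1]
  · refine ⟨![x 0 ^ 2, x 0 * x 1, (Zᴴ *ᵥ x) 0 * x 1], by simp [h0],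
      hform ((Zᴴ *ᵥ x) 0) (x 0) ?_ ?_⟩ <;>
      ext i <;> fin_cases i <;> simp [mulVec, dotProduct, Fin.sum_univ_two] <;> ring

lemma posDef_of_posSemidef_of_whitneyMap_posDef {Z : Matrix (Fin 2) (Fin 2) ℂ}
    (hZ : (1 - Z * Zᴴ).PosSemidef) (hf : (1 - whitneyMap Z * (whitneyMap Z)ᴴ).PosDef) :
    (1 - Z * Zᴴ).PosDef := by
  refine PosDef.of_dotProduct_mulVec_pos hZ.isHermitian fun x hx0 => ?_
  refine (hZ.dotProduct_mulVec_nonneg x).lt_of_ne fun hzero => ?_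
  obtain ⟨v, hv0, hv⟩ := exists_ne_zero_whitneyMap_form_eq_zero
    ((hZ.dotProduct_mulVec_zero_iff x).mp hzero.symm) hx0
  exact (hf.dotProduct_mulVec_pos hv0).ne' hv

lemma continuous_whitneyMap : Continuous whitneyMap := by
  refine continuous_matrix fun i j => ?_
  fin_cases i <;> fin_cases j <;> simp only [whitneyMap] <;> fun_prop

/-- The map sending `Z = (z₁ z₂; z₃ z₄)` to the matrix with rows
`(z₁², z₁z₂, z₂)`, `(z₁z₃, z₂z₃, z₄)`, `(z₃, z₄, 0)` maps `Ω_{2,2}` into `Ω_{3,3}` and is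
proper: preimages of compact subsets of `Ω_{3,3}` are compact. -/
theorem statement12 :
    (∀ Z ∈ OmegaI 2 2, whitneyMap Z ∈ OmegaI 3 3) ∧
    ∀ K : Set (Matrix (Fin 3) (Fin 3) ℂ), K ⊆ OmegaI 3 3 → IsCompact K →
      IsCompact {Z | Z ∈ OmegaI 2 2 ∧ whitneyMap Z ∈ K} := by
  refine ⟨fun Z hZ => posDef_whitneyMap hZ, fun K hK hKc => ?_⟩
  have hpreimage : {Z | Z ∈ OmegaI 2 2 ∧ whitneyMap Z ∈ K}
      = {Z | (1 - Z * Zᴴ).PosSemidef} ∩ whitneyMap ⁻¹' K := by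
    ext Z
    exact ⟨fun ⟨hZ, hZK⟩ => ⟨hZ.posSemidef, hZK⟩,
      fun ⟨hZ, hZK⟩ => ⟨posDef_of_posSemidef_of_whitneyMap_posDef hZ (hK hZK), hZK⟩⟩
  rw [hpreimage]
  exact isCompact_setOf_posSemidef_one_sub_mul_conjTranspose.inter_right
    (hKc.isClosed.preimage continuous_whitneyMap)
end

section
/- Let r ≥ 1 and let h : Ω_{r,r} → ℂ be holomorphic (i.e., h is complex differentiable on the open set Ω_{r,r} ⊂ M(r×r, ℂ)) with |h(Z)| < 1 for all Z ∈ Ω_{r,r}. Define f(Z) to be the (r+1)×(r+1) block-diagonal matrix with upper-left block Z and lower-right entry h(Z). Then f maps Ω_{r,r} into Ω_{r+1,r+1}, and f : Ω_{r,r} → Ω_{r+1,r+1} is a proper map, i.e., the preimage under f of every compact subset of Ω_{r+1,r+1} is compact. -/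
/-!
Since `1 - diag(Z, W) diag(Z, W)ᴴ = diag(1 - Z Zᴴ, 1 - W Wᴴ)` and a block diagonal matrix is
positive definite iff both blocks are, `diag(Z, W) ∈ Ω_{r+s}` iff `Z ∈ Ω_r` and `W ∈ Ω_s`.
For properness, the pairs `(Z, W)` with `diag(Z, W)` in a compact `K ⊆ Ω_{r+s}` form a compact
set `T` whose first projection `A` is a compact subset of `Ω_r`; on `A` the map `Z ↦ (Z, h Z)` is
continuous, so the preimage `A ∩ {Z | (Z, h Z) ∈ T}` is closed in `A`, hence compact.
-/

open Matrix
open scoped ComplexOrder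

attribute [local instance] Matrix.normedAddCommGroup Matrix.normedSpace

/-- The block diagonal map of Statement 14: `Z ↦ diag(Z, h(Z))`. -/
noncomputable def blockDiagMap (r : ℕ) (h : Matrix (Fin r) (Fin r) ℂ → ℂ)
    (Z : Matrix (Fin r) (Fin r) ℂ) : Matrix (Fin (r + 1)) (Fin (r + 1)) ℂ :=
  (fromBlocks Z 0 0 (h Z • (1 : Matrix (Fin 1) (Fin 1) ℂ))).submatrix
    finSumFinEquiv.symm finSumFinEquiv.symm

namespace Matrix

variable {𝕜 l m n : Type*} [RCLike 𝕜]

theorem posDef_submatrix_equiv {M : Matrix n n 𝕜} (e : l ≃ n) :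
    (M.submatrix e e).PosDef ↔ M.PosDef :=
  ⟨fun h => by simpa using h.submatrix e.symm.injective, fun h => h.submatrix e.injective⟩

theorem one_sub_submatrix_mul_conjTranspose [Fintype l] [Fintype n] [DecidableEq l]
    [DecidableEq n] (M : Matrix n n 𝕜) (e : l ≃ n) :
    1 - M.submatrix e e * (M.submatrix e e)ᴴ = (1 - M * Mᴴ).submatrix e e := by
  rw [conjTranspose_submatrix, submatrix_mul_equiv, ← submatrix_one_equiv e]
  rfl

variable [Fintype m] [Fintype n] [DecidableEq m] [DecidableEq n]

theorem posDef_fromBlocks_zero_iff {A : Matrix m m 𝕜} {D : Matrix n n 𝕜} :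
    (fromBlocks A 0 0 D).PosDef ↔ A.PosDef ∧ D.PosDef := by
  refine ⟨fun h => ⟨h.submatrix Sum.inl_injective, h.submatrix Sum.inr_injective⟩,
    fun ⟨hA, hD⟩ => ?_⟩
  let := hA.isUnit.invertible
  have hsemi : (fromBlocks A 0 0 D).PosSemidef := by
    simpa using (PosDef.fromBlocks₁₁ 0 D hA).mpr (by simpa using hD.posSemidef)
  exact hsemi.posDef_iff_isUnit.mpr (isUnit_fromBlocks_zero₂₁.mpr ⟨hA.isUnit, hD.isUnit⟩)

theorem one_sub_fromBlocks_mul_conjTranspose (A : Matrix m m 𝕜) (D : Matrix n n 𝕜) :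
    1 - fromBlocks A 0 0 D * (fromBlocks A 0 0 D)ᴴ =
      fromBlocks (1 - A * Aᴴ) 0 0 (1 - D * Dᴴ) := by
  simp [fromBlocks_conjTranspose, fromBlocks_multiply, ← fromBlocks_one, sub_eq_add_neg,
    fromBlocks_neg, fromBlocks_add]

end Matrix

noncomputable def blockDiagFin {r s : ℕ} (Z : Matrix (Fin r) (Fin r) ℂ)
    (W : Matrix (Fin s) (Fin s) ℂ) : Matrix (Fin (r + s)) (Fin (r + s)) ℂ :=
  (fromBlocks Z 0 0 W).submatrix finSumFinEquiv.symm finSumFinEquiv.symm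

section blockDiagFin

variable {r s : ℕ}

theorem blockDiagFin_mem_omegaI_iff {Z : Matrix (Fin r) (Fin r) ℂ}
    {W : Matrix (Fin s) (Fin s) ℂ} :
    blockDiagFin Z W ∈ OmegaI (r + s) (r + s) ↔ Z ∈ OmegaI r r ∧ W ∈ OmegaI s s := by
  simp only [OmegaI, Set.mem_ofPred_eq, blockDiagFin]
  rw [one_sub_submatrix_mul_conjTranspose, posDef_submatrix_equiv,
    one_sub_fromBlocks_mul_conjTranspose, posDef_fromBlocks_zero_iff]

theorem smul_one_mem_omegaI_one_iff {c : ℂ} :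
    c • (1 : Matrix (Fin 1) (Fin 1) ℂ) ∈ OmegaI 1 1 ↔ ‖c‖ < 1 := by
  have : 1 - c • (1 : Matrix (Fin 1) (Fin 1) ℂ) * (c • 1)ᴴ =
      diagonal fun _ => ((1 - ‖c‖ ^ 2 : ℝ) : ℂ) := by
    ext i j
    simp [Subsingleton.elim i j, Complex.conj_mul']
  simp only [OmegaI, Set.mem_ofPred_eq, this, posDef_diagonal_iff, Complex.zero_lt_real]
  simp

theorem continuous_uncurry_blockDiagFin :
    Continuous (Function.uncurry (blockDiagFin (r := r) (s := s))) :=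
  (continuous_fst.matrix_fromBlocks continuous_const continuous_const
    continuous_snd).matrix_submatrix _ _

theorem isCompact_preimage_blockDiagFin {K : Set (Matrix (Fin (r + s)) (Fin (r + s)) ℂ)}
    (hK : IsCompact K) : IsCompact (Function.uncurry blockDiagFin ⁻¹' K) := by
  let blocks (M : Matrix (Fin (r + s)) (Fin (r + s)) ℂ) :=
    (M.submatrix (finSumFinEquiv ∘ Sum.inl) (finSumFinEquiv ∘ Sum.inl),
      M.submatrix (finSumFinEquiv ∘ Sum.inr) (finSumFinEquiv ∘ Sum.inr))
  have hblocks : Continuous blocks :=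
    (continuous_id.matrix_submatrix _ _).prodMk (continuous_id.matrix_submatrix _ _)
  refine (hK.image hblocks).of_isClosed_subset
    (hK.isClosed.preimage continuous_uncurry_blockDiagFin) fun ⟨Z, W⟩ hp => ⟨_, hp, ?_⟩
  ext <;> simp [blocks, blockDiagFin]

theorem isCompact_setOf_blockDiagFin_mem
    {g : Matrix (Fin r) (Fin r) ℂ → Matrix (Fin s) (Fin s) ℂ} (hg : ContinuousOn g (OmegaI r r))
    {K : Set (Matrix (Fin (r + s)) (Fin (r + s)) ℂ)}
    (hKΩ : K ⊆ OmegaI (r + s) (r + s)) (hK : IsCompact K) :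
    IsCompact {Z | Z ∈ OmegaI r r ∧ blockDiagFin Z (g Z) ∈ K} := by
  set T := Function.uncurry blockDiagFin ⁻¹' K
  have hT : IsCompact T := isCompact_preimage_blockDiagFin hK
  have hTΩ : Prod.fst '' T ⊆ OmegaI r r := by
    rintro _ ⟨p, hp, rfl⟩
    exact (blockDiagFin_mem_omegaI_iff.mp (hKΩ hp)).1
  have hgraph : ContinuousOn (fun Z => (Z, g Z)) (Prod.fst '' T) :=
    (continuousOn_id.prodMk hg).mono hTΩ
  have hA : IsCompact (Prod.fst '' T) := hT.image continuous_fst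
  have hS : {Z | Z ∈ OmegaI r r ∧ blockDiagFin Z (g Z) ∈ K} =
      Prod.fst '' T ∩ (fun Z => (Z, g Z)) ⁻¹' T := by
    ext Z
    exact ⟨fun hZ => ⟨⟨(Z, g Z), hZ.2, rfl⟩, hZ.2⟩, fun hZ => ⟨hTΩ hZ.1, hZ.2⟩⟩
  rw [hS]
  exact hA.of_isClosed_subset (hgraph.preimage_isClosed_of_isClosed hA.isClosed hT.isClosed)
    Set.inter_subset_left

end blockDiagFin

theorem statement14_general (r : ℕ)
    (h : Matrix (Fin r) (Fin r) ℂ → ℂ)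
    (hhol : DifferentiableOn ℂ h (OmegaI r r))
    (hbdd : ∀ Z ∈ OmegaI r r, ‖h Z‖ < 1) :
    (∀ Z ∈ OmegaI r r, blockDiagMap r h Z ∈ OmegaI (r + 1) (r + 1)) ∧
    ∀ K : Set (Matrix (Fin (r + 1)) (Fin (r + 1)) ℂ), K ⊆ OmegaI (r + 1) (r + 1) →
      IsCompact K → IsCompact {Z | Z ∈ OmegaI r r ∧ blockDiagMap r h Z ∈ K} := by
  have hdef : blockDiagMap r h = fun Z => blockDiagFin Z (h Z • 1) := rfl
  rw [hdef]
  exact ⟨fun Z hZ =>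
      blockDiagFin_mem_omegaI_iff.mpr ⟨hZ, smul_one_mem_omegaI_one_iff.mpr (hbdd Z hZ)⟩,
    fun _ hKΩ hK =>
      isCompact_setOf_blockDiagFin_mem (hhol.continuousOn.smul continuousOn_const) hKΩ hK⟩

/-- If `h : Ω_{r,r} → ℂ` is holomorphic with `|h(Z)| < 1` on `Ω_{r,r}`,
then `Z ↦ diag(Z, h(Z))` maps `Ω_{r,r}` into `Ω_{r+1,r+1}` and is proper: preimages of
compact subsets of `Ω_{r+1,r+1}` are compact. -/
theorem statement14 (r : ℕ) (hr : 1 ≤ r)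
    (h : Matrix (Fin r) (Fin r) ℂ → ℂ)
    (hhol : DifferentiableOn ℂ h (OmegaI r r))
    (hbdd : ∀ Z ∈ OmegaI r r, ‖h Z‖ < 1) :
    (∀ Z ∈ OmegaI r r, blockDiagMap r h Z ∈ OmegaI (r + 1) (r + 1)) ∧
    ∀ K : Set (Matrix (Fin (r + 1)) (Fin (r + 1)) ℂ), K ⊆ OmegaI (r + 1) (r + 1) →
      IsCompact K → IsCompact {Z | Z ∈ OmegaI r r ∧ blockDiagMap r h Z ∈ K} :=
  statement14_general r h hhol hbdd
end
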